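/- arXiv:1012.2428 — 7 statements merged into one kernel-verified Lean document; each statement's English description precedes it below -/
import Mathlib

section
/- (Lemma 3, expansion of a specialized ultradiscrete permanent along its last row) Let N ≥ 2 be an integer, let y_1,…,y_N and r_1,…,r_N be real numbers with |r_1| ≤ |r_2| ≤ … ≤ |r_{N−1}| ≤ r_N (in particular r_N ≥ 0), and let x_j be the N-dimensional vector whose i-th entry is |y_i + j r_i|, while x̃_j denotes the (N−1)-dimensional vector whose i-th entry is |y_i + j r_i| for i = 1,…,N−1. Then for all integers j_1 < j_2 < … < j_N: max[x_{j_1} x_{j_2} … x_{j_N}] = max( y_N + j_N r_N + max[x̃_{j_1} x̃_{j_2} … x̃_{j_{N−1}}], −y_N − j_1 r_N + max[x̃_{j_2} x̃_{j_3} … x̃_{j_N}] ). -/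
/-- The ultradiscrete permanent of an `N × N` real matrix:
the maximum over all permutations `π` of `∑ i, A i (π i)`. -/
noncomputable def uperm {N : ℕ} (A : Matrix (Fin N) (Fin N) ℝ) : ℝ :=
  Finset.univ.sup' ⟨1, Finset.mem_univ 1⟩
    (fun π : Equiv.Perm (Fin N) => ∑ i, A i (π i))

/-- Ultradiscrete permanent of the matrix whose `j`-th column is the vector `x (c j)`. -/
noncomputable def upX {N : ℕ} (x : ℤ → Fin N → ℝ) (c : Fin N → ℤ) : ℝ :=
  uperm (Matrix.of fun i j => x (c j) i)

/-- The column vector `x_j` with `i`-th entry `|y_i + j r_i|`. -/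
noncomputable def xcol {N : ℕ} (y r : Fin N → ℝ) (j : ℤ) : Fin N → ℝ :=
  fun i => |y i + (j : ℝ) * r i|

/-- Enumeration (in increasing order) of the column index set `{a, a+1, …, a+N} \ {k}`. -/
def omitOne (N : ℕ) (a k : ℤ) : Fin N → ℤ :=
  fun j => if (j.1 : ℤ) + a < k then (j.1 : ℤ) + a else (j.1 : ℤ) + a + 1

/-- Enumeration (in increasing order) of the column index set
`{a, a+1, …, a+N+1} \ {k₁, k₂}` (for `k₁ < k₂`). -/
def omitTwo (N : ℕ) (a k₁ k₂ : ℤ) : Fin N → ℤ :=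
  fun j =>
    if (j.1 : ℤ) + a < k₁ then (j.1 : ℤ) + a
    else if (j.1 : ℤ) + a + 1 < k₂ then (j.1 : ℤ) + a + 1
    else (j.1 : ℤ) + a + 2

/-- extension of a perm of Fin N to Fin (N+1) fixing last -/
def extLast {N : ℕ} (σ : Equiv.Perm (Fin N)) : Equiv.Perm (Fin (N + 1)) where
  toFun := Fin.lastCases (Fin.last N) (fun i => (σ i).castSucc)
  invFun := Fin.lastCases (Fin.last N) (fun i => (σ.symm i).castSucc)
  left_inv := by
    intro x
    cases x using Fin.lastCases with
    | last => simp
    | cast i => simp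
  right_inv := by
    intro x
    cases x using Fin.lastCases with
    | last => simp
    | cast i => simp

@[simp] lemma extLast_last {N : ℕ} (σ : Equiv.Perm (Fin N)) :
    extLast σ (Fin.last N) = Fin.last N := by simp [extLast]

@[simp] lemma extLast_castSucc {N : ℕ} (σ : Equiv.Perm (Fin N)) (i : Fin N) :
    extLast σ i.castSucc = (σ i).castSucc := by simp [extLast]

/-- extension of a perm of Fin N to Fin (N+1) sending last to 0, castSucc to succ -/
def extZero {N : ℕ} (σ : Equiv.Perm (Fin N)) : Equiv.Perm (Fin (N + 1)) where
  toFun := Fin.lastCases 0 (fun i => (σ i).succ)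
  invFun := Fin.cases (Fin.last N) (fun i => (σ.symm i).castSucc)
  left_inv := by
    intro x
    cases x using Fin.lastCases with
    | last => simp
    | cast i => simp
  right_inv := by
    intro x
    cases x using Fin.cases with
    | zero => simp
    | succ i => simp

@[simp] lemma extZero_last {N : ℕ} (σ : Equiv.Perm (Fin N)) :
    extZero σ (Fin.last N) = 0 := by simp [extZero]

@[simp] lemma extZero_castSucc {N : ℕ} (σ : Equiv.Perm (Fin N)) (i : Fin N) :
    extZero σ i.castSucc = (σ i).succ := by simp [extZero]

lemma abs_move (Y R RL : ℝ) (hR : |R| ≤ RL) (a b : ℝ) (hab : a ≤ b) :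
    |Y + b * R| ≤ |Y + a * R| + (b - a) * RL := by
  have h1 : |Y + b * R| ≤ |Y + a * R| + |(b - a) * R| := by
    have h : Y + b * R = (Y + a * R) + (b - a) * R := by ring
    rw [h]; exact abs_add_le _ _
  have h2 : |(b - a) * R| ≤ (b - a) * RL := by
    rw [abs_mul, abs_of_nonneg (by linarith : (0:ℝ) ≤ b - a)]
    exact mul_le_mul_of_nonneg_left hR (by linarith)
  linarith

lemma abs_move' (Y R RL : ℝ) (hR : |R| ≤ RL) (a b : ℝ) (hab : a ≤ b) :
    |Y + a * R| ≤ |Y + b * R| + (b - a) * RL := by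
  have h1 : |Y + a * R| ≤ |Y + b * R| + |(a - b) * R| := by
    have h : Y + a * R = (Y + b * R) + (a - b) * R := by ring
    rw [h]; exact abs_add_le _ _
  have h2 : |(a - b) * R| ≤ (b - a) * RL := by
    rw [abs_mul, abs_of_nonpos (by linarith : (a - b : ℝ) ≤ 0)]
    calc -(a-b) * |R| = (b-a) * |R| := by ring
    _ ≤ (b - a) * RL := mul_le_mul_of_nonneg_left hR (by linarith)
  linarith

/-- Lemma 3: expansion of a specialized ultradiscrete permanent along its last row.
Here the ambient dimension is `N + 1` (so `N + 1 ≥ 2`), the ordering hypothesis is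
`|r_1| ≤ … ≤ |r_N| ≤ r_{N+1}` (1-indexed), the columns are `x_{j_1}, …, x_{j_{N+1}}`
with `j_1 < … < j_{N+1}`, and the tilde vectors consist of the first `N` entries. -/
theorem lemma3 (N : ℕ) (hN : 1 ≤ N) (y r : Fin (N + 1) → ℝ)
    (hchain : ∀ i j : Fin (N + 1), i ≤ j → (j : ℕ) < N → |r i| ≤ |r j|)
    (hlast : |r ⟨N - 1, by omega⟩| ≤ r (Fin.last N))
    (js : Fin (N + 1) → ℤ) (hjs : StrictMono js) :
    upX (xcol y r) js =
      max
        (y (Fin.last N) + (js (Fin.last N) : ℝ) * r (Fin.last N) +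
          upX (xcol (fun i : Fin N => y i.castSucc) (fun i : Fin N => r i.castSucc))
            (fun j : Fin N => js j.castSucc))
        (-y (Fin.last N) - (js 0 : ℝ) * r (Fin.last N) +
          upX (xcol (fun i : Fin N => y i.castSucc) (fun i : Fin N => r i.castSucc))
            (fun j : Fin N => js j.succ)) := by
  classical
  set L : Fin (N + 1) := Fin.last N with hLdef
  -- entry function
  set F : Fin (N + 1) → Fin (N + 1) → ℝ := fun i k => |y i + (js k : ℝ) * r i| with hF
  have hmono := hjs.monotone
  have hrL : ∀ i : Fin N, |r i.castSucc| ≤ r L := by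
    intro i
    have h9 : |r i.castSucc| ≤ |r ⟨N - 1, by omega⟩| := by
      apply hchain
      · have := i.2
        simp only [Fin.le_def, Fin.coe_castSucc]
        omega
      · show N - 1 < N
        omega
    exact h9.trans hlast
  -- representations as sup'
  have hrepr : upX (xcol y r) js = Finset.univ.sup' ⟨1, Finset.mem_univ 1⟩
      (fun π : Equiv.Perm (Fin (N + 1)) => ∑ i, F i (π i)) := rfl
  have hrepr1 : upX (xcol (fun i : Fin N => y i.castSucc) (fun i : Fin N => r i.castSucc))
        (fun j : Fin N => js j.castSucc)
      = Finset.univ.sup' ⟨1, Finset.mem_univ 1⟩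
        (fun σ : Equiv.Perm (Fin N) => ∑ i, F i.castSucc ((σ i).castSucc)) := rfl
  have hrepr2 : upX (xcol (fun i : Fin N => y i.castSucc) (fun i : Fin N => r i.castSucc))
        (fun j : Fin N => js j.succ)
      = Finset.univ.sup' ⟨1, Finset.mem_univ 1⟩
        (fun σ : Equiv.Perm (Fin N) => ∑ i, F i.castSucc ((σ i).succ)) := rfl
  rw [hrepr, hrepr1, hrepr2]
  set S1 : ℝ := Finset.univ.sup' ⟨1, Finset.mem_univ 1⟩
      (fun σ : Equiv.Perm (Fin N) => ∑ i, F i.castSucc ((σ i).castSucc)) with hS1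
  set S2 : ℝ := Finset.univ.sup' ⟨1, Finset.mem_univ 1⟩
      (fun σ : Equiv.Perm (Fin N) => ∑ i, F i.castSucc ((σ i).succ)) with hS2
  apply le_antisymm
  · -- every permutation sum is ≤ the max
    apply Finset.sup'_le
    intro π _
    rw [Fin.sum_univ_castSucc]
    set k : Fin (N + 1) := π L with hk
    rcases le_or_gt 0 (y L + (js k : ℝ) * r L) with hpos | hneg
    · -- goes to the first branch
      refine le_trans ?_ (le_max_left _ _)
      have hFL : F L (π L) = y L + (js k : ℝ) * r L := by
        rw [hF]; exact abs_of_nonneg hpos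
      -- the modified permutation
      set i0 : Fin (N + 1) := π.symm L with hi0
      set τ : Equiv.Perm (Fin (N + 1)) := π * Equiv.swap L i0 with hτ
      have hτL : τ L = L := by
        rw [hτ]
        simp only [Equiv.Perm.mul_apply, Equiv.swap_apply_left, hi0, Equiv.apply_symm_apply]
      have hne : ∀ i : Fin N, τ i.castSucc ≠ L := by
        intro i h
        have h2 : τ i.castSucc = τ L := by rw [h, hτL]
        exact (Fin.castSucc_lt_last i).ne (τ.injective h2)
      set g : Fin N → Fin N := fun i => (τ i.castSucc).castPred (hne i) with hg
      have hgc : ∀ i, (g i).castSucc = τ i.castSucc := fun i => Fin.castSucc_castPred _ _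
      have hginj : Function.Injective g := by
        intro a b hab
        have : τ a.castSucc = τ b.castSucc := by rw [← hgc, ← hgc, hab]
        exact Fin.castSucc_injective _ (τ.injective this)
      set σ : Equiv.Perm (Fin N) := Equiv.ofBijective g
        (Finite.injective_iff_bijective.mp hginj) with hσ
      have hσap : ∀ i, σ i = g i := fun i => rfl
      have hτsum : ∑ i : Fin N, F i.castSucc (τ i.castSucc) ≤ S1 := by
        have : (∑ i : Fin N, F i.castSucc ((σ i).castSucc)) ≤ S1 :=
          Finset.le_sup' (fun σ : Equiv.Perm (Fin N) =>
            ∑ i, F i.castSucc ((σ i).castSucc)) (Finset.mem_univ σ)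
        calc ∑ i : Fin N, F i.castSucc (τ i.castSucc)
            = ∑ i : Fin N, F i.castSucc ((σ i).castSucc) := by
              refine Finset.sum_congr rfl fun i _ => ?_
              rw [hσap, hgc]
        _ ≤ S1 := this
      have hkL : js k ≤ js L := hmono (Fin.le_last k)
      have hsum : ∑ i : Fin N, F i.castSucc (π i.castSucc)
          ≤ (∑ i : Fin N, F i.castSucc (τ i.castSucc)) + ((js L : ℝ) - js k) * r L := by
        rcases eq_or_ne i0 L with h0 | h0
        · -- π fixes L, τ = π, k = L
          have hkk : k = L := by
            have h1 : π i0 = π L := congrArg π h0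
            rw [hi0, Equiv.apply_symm_apply] at h1
            exact hk.trans h1.symm
          have hττ : τ = π := by rw [hτ, h0, Equiv.swap_self]; rfl
          rw [hττ, hkk]
          simp
        · -- i0 = m.castSucc
          set m : Fin N := i0.castPred h0 with hm
          have hmc : m.castSucc = i0 := Fin.castSucc_castPred _ _
          have heq : ∀ i : Fin N, i ≠ m →
              F i.castSucc (π i.castSucc) = F i.castSucc (τ i.castSucc) := by
            intro i hi
            have h1 : τ i.castSucc = π i.castSucc := by
              rw [hτ]
              simp only [Equiv.Perm.mul_apply]
              rw [Equiv.swap_apply_of_ne_of_ne (Fin.castSucc_lt_last i).ne]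
              rw [← hmc]
              exact fun hh => hi (Fin.castSucc_injective _ hh)
            rw [h1]
          have hπm : π m.castSucc = L := by rw [hmc, hi0, Equiv.apply_symm_apply]
          have hτm : τ m.castSucc = k := by
            rw [hmc, hτ]
            simp only [Equiv.Perm.mul_apply, Equiv.swap_apply_right]
            exact hk.symm
          have hbound : F m.castSucc (π m.castSucc)
              ≤ F m.castSucc (τ m.castSucc) + ((js L : ℝ) - js k) * r L := by
            rw [hπm, hτm, hF]
            exact abs_move _ _ _ (hrL m) _ _ (by exact_mod_cast hkL)
          rw [← Finset.sum_erase_add Finset.univ _ (Finset.mem_univ m),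
            ← Finset.sum_erase_add Finset.univ
              (fun i : Fin N => F i.castSucc (τ i.castSucc)) (Finset.mem_univ m)]
          have he : ∑ i ∈ Finset.univ.erase m, F i.castSucc (π i.castSucc)
              = ∑ i ∈ Finset.univ.erase m, F i.castSucc (τ i.castSucc) :=
            Finset.sum_congr rfl fun i hi => heq i (Finset.ne_of_mem_erase hi)
          rw [he]
          linarith
      have : F L (π L) = y L + (js k : ℝ) * r L := hFL
      calc (∑ i : Fin N, F i.castSucc (π i.castSucc)) + F L (π L)
          ≤ ((∑ i : Fin N, F i.castSucc (τ i.castSucc)) + ((js L : ℝ) - js k) * r L)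
            + (y L + (js k : ℝ) * r L) := by rw [hFL]; linarith
        _ ≤ (S1 + ((js L : ℝ) - js k) * r L) + (y L + (js k : ℝ) * r L) := by linarith
        _ = y L + (js L : ℝ) * r L + S1 := by ring
    · -- goes to the second branch
      refine le_trans ?_ (le_max_right _ _)
      have hFL : F L (π L) = -(y L + (js k : ℝ) * r L) := by
        rw [hF]; exact abs_of_neg hneg
      set i0 : Fin (N + 1) := π.symm 0 with hi0
      set τ : Equiv.Perm (Fin (N + 1)) := π * Equiv.swap L i0 with hτ
      have hτL : τ L = 0 := by
        rw [hτ]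
        simp only [Equiv.Perm.mul_apply, Equiv.swap_apply_left, hi0, Equiv.apply_symm_apply]
      have hne : ∀ i : Fin N, τ i.castSucc ≠ 0 := by
        intro i h
        have h2 : τ i.castSucc = τ L := by rw [h, hτL]
        exact (Fin.castSucc_lt_last i).ne (τ.injective h2)
      set g : Fin N → Fin N := fun i => (τ i.castSucc).pred (hne i) with hg
      have hgc : ∀ i, (g i).succ = τ i.castSucc := fun i => Fin.succ_pred _ _
      have hginj : Function.Injective g := by
        intro a b hab
        have : τ a.castSucc = τ b.castSucc := by rw [← hgc, ← hgc, hab]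
        exact Fin.castSucc_injective _ (τ.injective this)
      set σ : Equiv.Perm (Fin N) := Equiv.ofBijective g
        (Finite.injective_iff_bijective.mp hginj) with hσ
      have hσap : ∀ i, σ i = g i := fun i => rfl
      have hτsum : ∑ i : Fin N, F i.castSucc (τ i.castSucc) ≤ S2 := by
        have : (∑ i : Fin N, F i.castSucc ((σ i).succ)) ≤ S2 :=
          Finset.le_sup' (fun σ : Equiv.Perm (Fin N) =>
            ∑ i, F i.castSucc ((σ i).succ)) (Finset.mem_univ σ)
        calc ∑ i : Fin N, F i.castSucc (τ i.castSucc)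
            = ∑ i : Fin N, F i.castSucc ((σ i).succ) := by
              refine Finset.sum_congr rfl fun i _ => ?_
              rw [hσap, hgc]
        _ ≤ S2 := this
      have hk0 : js 0 ≤ js k := hmono (Fin.zero_le k)
      have hsum : ∑ i : Fin N, F i.castSucc (π i.castSucc)
          ≤ (∑ i : Fin N, F i.castSucc (τ i.castSucc)) + ((js k : ℝ) - js 0) * r L := by
        rcases eq_or_ne i0 L with h0 | h0
        · have hkk : k = 0 := by
            rw [hk, show L = π.symm 0 from h0.symm, Equiv.apply_symm_apply]
          have hττ : τ = π := by rw [hτ, h0, Equiv.swap_self]; rfl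
          rw [hττ, hkk]
          simp
        · set m : Fin N := i0.castPred h0 with hm
          have hmc : m.castSucc = i0 := Fin.castSucc_castPred _ _
          have heq : ∀ i : Fin N, i ≠ m →
              F i.castSucc (π i.castSucc) = F i.castSucc (τ i.castSucc) := by
            intro i hi
            have h1 : τ i.castSucc = π i.castSucc := by
              rw [hτ]
              simp only [Equiv.Perm.mul_apply]
              rw [Equiv.swap_apply_of_ne_of_ne (Fin.castSucc_lt_last i).ne]
              rw [← hmc]
              exact fun hh => hi (Fin.castSucc_injective _ hh)
            rw [h1]
          have hπm : π m.castSucc = 0 := by rw [hmc, hi0, Equiv.apply_symm_apply]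
          have hτm : τ m.castSucc = k := by
            rw [hmc, hτ]
            simp only [Equiv.Perm.mul_apply, Equiv.swap_apply_right]
            exact hk.symm
          have hbound : F m.castSucc (π m.castSucc)
              ≤ F m.castSucc (τ m.castSucc) + ((js k : ℝ) - js 0) * r L := by
            rw [hπm, hτm, hF]
            exact abs_move' _ _ _ (hrL m) _ _ (by exact_mod_cast hk0)
          rw [← Finset.sum_erase_add Finset.univ _ (Finset.mem_univ m),
            ← Finset.sum_erase_add Finset.univ
              (fun i : Fin N => F i.castSucc (τ i.castSucc)) (Finset.mem_univ m)]
          have he : ∑ i ∈ Finset.univ.erase m, F i.castSucc (π i.castSucc)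
              = ∑ i ∈ Finset.univ.erase m, F i.castSucc (τ i.castSucc) :=
            Finset.sum_congr rfl fun i hi => heq i (Finset.ne_of_mem_erase hi)
          rw [he]
          linarith
      calc (∑ i : Fin N, F i.castSucc (π i.castSucc)) + F L (π L)
          ≤ ((∑ i : Fin N, F i.castSucc (τ i.castSucc)) + ((js k : ℝ) - js 0) * r L)
            + (-(y L + (js k : ℝ) * r L)) := by rw [hFL]; linarith
        _ ≤ (S2 + ((js k : ℝ) - js 0) * r L) + (-(y L + (js k : ℝ) * r L)) := by linarith
        _ = -y L - (js 0 : ℝ) * r L + S2 := by ring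
  · -- max ≤ sup'
    apply max_le
    · obtain ⟨σ0, -, hσ0⟩ := Finset.exists_mem_eq_sup'
        (⟨1, Finset.mem_univ 1⟩ : (Finset.univ : Finset (Equiv.Perm (Fin N))).Nonempty)
        (fun σ : Equiv.Perm (Fin N) => ∑ i, F i.castSucc ((σ i).castSucc))
      rw [hS1, hσ0]
      have h1 : (∑ i : Fin (N + 1), F i (extLast σ0 i))
          ≤ Finset.univ.sup' ⟨1, Finset.mem_univ 1⟩
            (fun π : Equiv.Perm (Fin (N + 1)) => ∑ i, F i (π i)) :=
        Finset.le_sup' (fun π : Equiv.Perm (Fin (N + 1)) => ∑ i, F i (π i))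
          (Finset.mem_univ (extLast σ0))
      refine le_trans ?_ h1
      rw [Fin.sum_univ_castSucc]
      have h2 : ∀ i : Fin N, F i.castSucc (extLast σ0 i.castSucc)
          = F i.castSucc ((σ0 i).castSucc) := by intro i; rw [extLast_castSucc]
      have h3 : F L (extLast σ0 L) = |y L + (js L : ℝ) * r L| := by
        rw [hLdef, extLast_last]
      rw [Finset.sum_congr rfl fun i _ => h2 i, h3]
      have := le_abs_self (y L + (js L : ℝ) * r L)
      linarith
    · obtain ⟨σ0, -, hσ0⟩ := Finset.exists_mem_eq_sup'
        (⟨1, Finset.mem_univ 1⟩ : (Finset.univ : Finset (Equiv.Perm (Fin N))).Nonempty)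
        (fun σ : Equiv.Perm (Fin N) => ∑ i, F i.castSucc ((σ i).succ))
      rw [hS2, hσ0]
      have h1 : (∑ i : Fin (N + 1), F i (extZero σ0 i))
          ≤ Finset.univ.sup' ⟨1, Finset.mem_univ 1⟩
            (fun π : Equiv.Perm (Fin (N + 1)) => ∑ i, F i (π i)) :=
        Finset.le_sup' (fun π : Equiv.Perm (Fin (N + 1)) => ∑ i, F i (π i))
          (Finset.mem_univ (extZero σ0))
      refine le_trans ?_ h1
      rw [Fin.sum_univ_castSucc]
      have h2 : ∀ i : Fin N, F i.castSucc (extZero σ0 i.castSucc)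
          = F i.castSucc ((σ0 i).succ) := by intro i; rw [extZero_castSucc]
      have h3 : F L (extZero σ0 L) = |y L + (js 0 : ℝ) * r L| := by
        rw [hLdef, extZero_last]
      rw [Finset.sum_congr rfl fun i _ => h2 i, h3]
      have := neg_abs_le (y L + (js 0 : ℝ) * r L)
      linarith
end

section
/- (Hirota's identity for ultradiscrete permanents) Let N ≥ 2 be an integer and let a_1,…,a_{N−1}, b_1, b_2, b_3 be arbitrary N-dimensional real vectors. Set S_j = max[a_1 … a_{N−1} b_j] for j = 1,2,3 and T_{jk} = max[a_1 … a_{N−2} b_j b_k] for 1 ≤ j < k ≤ 3. Then max(S_1 + T_{23}, S_2 + T_{13}) = max(S_1 + T_{23}, S_3 + T_{12}) = max(S_2 + T_{13}, S_3 + T_{12}). -/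
/-- Ultradiscrete permanent of the matrix with columns `c 0, …, c (N-1)`. -/
noncomputable def upCols {N : ℕ} (c : Fin N → Fin N → ℝ) : ℝ :=
  uperm (Matrix.of fun i j => c j i)


lemma upCols_def {n : ℕ} (c : Fin n → Fin n → ℝ) :
    upCols c = Finset.univ.sup' ⟨1, Finset.mem_univ 1⟩
      (fun π : Equiv.Perm (Fin n) => ∑ i, c (π i) i) := rfl

lemma le_upCols {n : ℕ} (c : Fin n → Fin n → ℝ) (π : Equiv.Perm (Fin n)) :
    ∑ i, c (π i) i ≤ upCols c := by
  rw [upCols_def]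
  exact Finset.le_sup' (fun π : Equiv.Perm (Fin n) => ∑ i, c (π i) i) (Finset.mem_univ π)

lemma upCols_exists {n : ℕ} (c : Fin n → Fin n → ℝ) :
    ∃ π : Equiv.Perm (Fin n), upCols c = ∑ i, c (π i) i := by
  have h : ∃ π : Equiv.Perm (Fin n), π ∈ Finset.univ ∧
      (Finset.univ.sup' ⟨1, Finset.mem_univ 1⟩
        (fun π : Equiv.Perm (Fin n) => ∑ i, c (π i) i) : ℝ) = ∑ i, c (π i) i :=
    Finset.exists_mem_eq_sup' _ _
  obtain ⟨π, -, h⟩ := h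
  exact ⟨π, by rw [upCols_def, h]⟩


lemma upCols_comp {n : ℕ} (c : Fin n → Fin n → ℝ) (s : Equiv.Perm (Fin n)) :
    upCols (fun j => c (s j)) = upCols c := by
  apply le_antisymm
  · obtain ⟨π, h⟩ := upCols_exists (fun j => c (s j))
    rw [h]
    exact le_upCols c (π.trans s)
  · obtain ⟨π, h⟩ := upCols_exists c
    rw [h]
    have h2 := le_upCols (fun j => c (s j)) (π.trans s.symm)
    simpa using h2

section helpers
variable {N : ℕ} (a : Fin (N+1) → Fin (N+2) → ℝ)

lemma S_apply_ne (x y : Fin (N+2) → ℝ) (z : Fin (N+2)) (h : z ≠ Fin.last (N+1)) :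
    (Fin.snoc a x : Fin (N+2) → Fin (N+2) → ℝ) z = (Fin.snoc a y : Fin (N+2) → Fin (N+2) → ℝ) z := by
  obtain ⟨z', rfl⟩ := Fin.exists_castSucc_eq.mpr h
  simp

lemma T_apply_ne (a' : Fin N → Fin (N+2) → ℝ) (x y x' y' : Fin (N+2) → ℝ) (z : Fin (N+2))
    (h : z ≠ (Fin.last N).castSucc) (h2 : z ≠ Fin.last (N+1)) :
    (Fin.snoc (Fin.snoc a' x) y : Fin (N+2) → Fin (N+2) → ℝ) z
      = (Fin.snoc (Fin.snoc a' x') y' : Fin (N+2) → Fin (N+2) → ℝ) z := by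
  obtain ⟨z', rfl⟩ := Fin.exists_castSucc_eq.mpr h2
  have hz' : z' ≠ Fin.last N := fun hh => h (by rw [hh])
  obtain ⟨z'', rfl⟩ := Fin.exists_castSucc_eq.mpr hz'
  simp

lemma ST_apply_ne (x y z : Fin (N+2) → ℝ) (i : Fin (N+2))
    (h : i ≠ (Fin.last N).castSucc) (h2 : i ≠ Fin.last (N+1)) :
    (Fin.snoc a x : Fin (N+2) → Fin (N+2) → ℝ) i
      = (Fin.snoc (Fin.snoc (fun j : Fin N => a j.castSucc) y) z : Fin (N+2) → Fin (N+2) → ℝ) i := by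
  obtain ⟨i', rfl⟩ := Fin.exists_castSucc_eq.mpr h2
  have hi' : i' ≠ Fin.last N := fun hh => h (by rw [hh])
  obtain ⟨i'', rfl⟩ := Fin.exists_castSucc_eq.mpr hi'
  simp

end helpers

lemma key_abstract {n : ℕ} (p q : Fin n) (hpq : q ≠ p)
    (Su Sv Sw Tvw Tuw Tuv : Fin n → Fin n → ℝ)
    (hSv : ∀ z, z ≠ p → Sv z = Su z) (hSw : ∀ z, z ≠ p → Sw z = Su z)
    (hTvw : ∀ z, z ≠ p → z ≠ q → Tvw z = Su z)
    (hTuw : ∀ z, z ≠ p → z ≠ q → Tuw z = Su z)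
    (hTuv : ∀ z, z ≠ p → z ≠ q → Tuv z = Su z)
    (hTvwq : Tvw q = Sv p) (hTvwp : Tvw p = Sw p)
    (hTuwq : Tuw q = Su p) (hTuwp : Tuw p = Sw p)
    (hTuvq : Tuv q = Su p) (hTuvp : Tuv p = Sv p) :
    upCols Su + upCols Tvw ≤ max (upCols Sv + upCols Tuw) (upCols Sw + upCols Tuv) := by
  classical
  obtain ⟨σ, hσ⟩ := upCols_exists Su
  obtain ⟨τ, hτ⟩ := upCols_exists Tvw
  set g : Equiv.Perm (Fin n) := σ.symm.trans τ with hg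
  have hgσ : ∀ i, τ i = g (σ i) := fun i => by simp [hg]
  have hex : ∃ j, 0 < j ∧ ((g ^ j) p = q ∨ (g ^ j) p = p) :=
    ⟨Fintype.card (Equiv.Perm (Fin n)), Fintype.card_pos,
      Or.inr (by rw [pow_card_eq_one]; rfl)⟩
  obtain ⟨k, hk0, hkqp, hmin⟩ : ∃ k, 0 < k ∧ ((g ^ k) p = q ∨ (g ^ k) p = p) ∧
      ∀ j, 0 < j → j < k → (g ^ j) p ≠ q ∧ (g ^ j) p ≠ p := by
    refine ⟨Nat.find hex, (Nat.find_spec hex).1, (Nat.find_spec hex).2, ?_⟩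
    intro j hj hjk
    have h := Nat.find_min hex hjk
    push_neg at h
    exact h hj
  have hstep : ∀ j : ℕ, g ((g ^ j) p) = (g ^ (j + 1)) p := by
    intro j
    rw [pow_succ']
    rfl
  have horb2 : ∀ i j : ℕ, 0 < i → i < j → j ≤ k → (g ^ i) p ≠ (g ^ j) p := by
    intro i j hi hij hjk heq
    have h1 : (g ^ j) p = (g ^ i) ((g ^ (j - i)) p) := by
      rw [← Equiv.Perm.mul_apply, ← pow_add]
      congr 2
      omega
    rw [h1] at heq
    have h2 : p = (g ^ (j - i)) p := (g ^ i).injective heq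
    exact (hmin (j - i) (by omega) (by omega)).2 h2.symm
  have horb : ∀ i j : ℕ, i < j → j < k → (g ^ i) p ≠ (g ^ j) p := by
    intro i j hij hjk
    rcases Nat.eq_zero_or_pos i with rfl | hi
    · intro heq
      exact (hmin j (by omega) hjk).2 (by simpa using heq.symm)
    · exact horb2 i j hi hij (le_of_lt hjk)
  -- the list of the path columns, seen from the S side
  set L : List (Fin n) := (List.range k).map (fun j => (g ^ j) p) with hLdef
  have hLlen : L.length = k := by simp [hLdef]
  have hLget : ∀ (i : ℕ) (h : i < L.length), L[i] = (g ^ i) p := by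
    intro i h
    simp [hLdef]
  have hLnd : L.Nodup := by
    rw [hLdef]
    refine List.Nodup.map_on ?_ (List.nodup_range (n := k))
    intro i hi j hj hij
    simp only [List.mem_range] at hi hj
    by_contra hne
    rcases lt_or_gt_of_ne hne with h | h
    · exact horb i j h hj hij
    · exact horb j i h hi hij.symm
  have hmemL : ∀ z, z ∈ L ↔ ∃ j, j < k ∧ (g ^ j) p = z := by
    intro z
    simp [hLdef, List.mem_map, List.mem_range]
  have hpL : p ∈ L := (hmemL p).mpr ⟨0, hk0, by simp⟩
  have hcnot : ∀ z, z ∉ L → L.formPerm z = z := fun z h =>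
    List.formPerm_apply_of_notMem h
  have hcj : ∀ j : ℕ, j < k → L.formPerm ((g ^ j) p) = (g ^ ((j + 1) % k)) p := by
    intro j hj
    have hj' : j < L.length := by omega
    have h1 := List.formPerm_apply_getElem L hLnd j hj'
    rw [hLget j hj'] at h1
    rw [h1, hLget]
    rw [hLlen]
  rcases hkqp with hcase | hcase
  · -- `g^k p = q` : exchange towards `(Sv, Tuw)`
    set M : List (Fin n) := (List.range k).map (fun j => (g ^ (k - j)) p) with hMdef
    have hMlen : M.length = k := by simp [hMdef]
    have hMget : ∀ (i : ℕ) (h : i < M.length), M[i] = (g ^ (k - i)) p := by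
      intro i h
      simp [hMdef]
    have hMnd : M.Nodup := by
      rw [hMdef]
      refine List.Nodup.map_on ?_ (List.nodup_range (n := k))
      intro i hi j hj hij
      simp only [List.mem_range] at hi hj
      by_contra hne
      rcases lt_or_gt_of_ne hne with h | h
      · exact horb2 (k - j) (k - i) (by omega) (by omega) (by omega) hij.symm
      · exact horb2 (k - i) (k - j) (by omega) (by omega) (by omega) hij
    have hmemM : ∀ z, z ∈ M ↔ ∃ j, 0 < j ∧ j ≤ k ∧ (g ^ j) p = z := by
      intro z
      rw [hMdef]
      simp only [List.mem_map, List.mem_range]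
      constructor
      · rintro ⟨j, hj, rfl⟩
        exact ⟨k - j, by omega, by omega, rfl⟩
      · rintro ⟨j, hj0, hjk, rfl⟩
        refine ⟨k - j, by omega, ?_⟩
        rw [Nat.sub_sub_self hjk]
    have hdnot : ∀ z, z ∉ M → M.formPerm z = z := fun z h =>
      List.formPerm_apply_of_notMem h
    have hdj : ∀ j : ℕ, 2 ≤ j → j ≤ k → M.formPerm ((g ^ j) p) = (g ^ (j - 1)) p := by
      intro j h2 hk'
      have hi : k - j < M.length := by omega
      have h1 := List.formPerm_apply_getElem M hMnd (k - j) hi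
      rw [hMget _ hi, Nat.sub_sub_self (by omega)] at h1
      rw [h1, hMget]
      rw [hMlen]
      have hmod : (k - j + 1) % k = k - j + 1 := Nat.mod_eq_of_lt (by omega)
      rw [hmod]
      have : k - (k - j + 1) = j - 1 := by omega
      rw [this]
    have hd2 : M.formPerm (g p) = q := by
      have hi : k - 1 < M.length := by omega
      have h1 := List.formPerm_apply_getElem M hMnd (k - 1) hi
      rw [hMget _ hi, Nat.sub_sub_self (by omega), pow_one] at h1
      rw [h1, hMget]
      rw [hMlen]
      have hmod : (k - 1 + 1) % k = 0 := by
        have : k - 1 + 1 = k := by omega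
        rw [this, Nat.mod_self]
      rw [hmod, Nat.sub_zero, hcase]
    have hpt : ∀ i, Su (σ i) i + Tvw (τ i) i
        = Sv ((σ.trans L.formPerm) i) i + Tuw ((τ.trans M.formPerm) i) i := by
      intro i
      simp only [Equiv.trans_apply]
      rw [hgσ i]
      by_cases hyL : σ i ∈ L
      · obtain ⟨j, hj, hjy⟩ := (hmemL _).mp hyL
        rw [← hjy, hstep j]
        have eqS : Sv (L.formPerm ((g ^ j) p)) = Tvw ((g ^ (j + 1)) p) := by
          rw [hcj j hj]
          by_cases hjk : j + 1 = k
          · rw [hjk, Nat.mod_self, pow_zero, hcase]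
            simp only [Equiv.Perm.one_apply]
            rw [hTvwq]
          · have hmod : (j + 1) % k = j + 1 := Nat.mod_eq_of_lt (by omega)
            rw [hmod]
            have hne := hmin (j + 1) (by omega) (by omega)
            rw [hSv _ hne.2, hTvw _ hne.2 hne.1]
        have eqT : Tuw (M.formPerm ((g ^ (j + 1)) p)) = Su ((g ^ j) p) := by
          by_cases hj0 : j = 0
          · subst hj0
            rw [pow_one, hd2, hTuwq, pow_zero]
            simp
          · rw [hdj (j + 1) (by omega) (by omega), Nat.add_sub_cancel]
            have hne := hmin j (by omega) hj
            rw [hTuw _ hne.2 hne.1]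
        rw [eqS, eqT]
        ring
      · have hgM : g (σ i) ∉ M := by
          intro hmem
          obtain ⟨j, hj0, hjk, hjy⟩ := (hmemM _).mp hmem
          apply hyL
          refine (hmemL _).mpr ⟨j - 1, by omega, ?_⟩
          apply g.injective
          rw [hstep (j - 1)]
          have hj1 : j - 1 + 1 = j := by omega
          rw [hj1, hjy]
        rw [hcnot _ hyL, hdnot _ hgM]
        have h1 : Sv (σ i) = Su (σ i) := hSv _ (fun h => hyL (by rw [h]; exact hpL))
        have h2 : Tuw (g (σ i)) = Tvw (g (σ i)) := by
          by_cases hgp : g (σ i) = p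
          · rw [hgp, hTuwp, hTvwp]
          · have hgq : g (σ i) ≠ q := by
              intro h
              exact hgM ((hmemM _).mpr ⟨k, hk0, le_refl k, by rw [hcase, h]⟩)
            rw [hTuw _ hgp hgq, hTvw _ hgp hgq]
        rw [h1, h2]
    have hsum : upCols Su + upCols Tvw
        = ∑ i, Sv ((σ.trans L.formPerm) i) i + ∑ i, Tuw ((τ.trans M.formPerm) i) i := by
      rw [hσ, hτ, ← Finset.sum_add_distrib, ← Finset.sum_add_distrib]
      exact Finset.sum_congr rfl fun i _ => hpt i
    rw [hsum]
    exact le_trans (add_le_add (le_upCols Sv _) (le_upCols Tuw _)) (le_max_left _ _)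
  · -- `g^k p = p` : exchange towards `(Sw, Tuv)`
    set E : List (Fin n) := (List.range (k+1)).map
      (fun j => if j = k then q else (g ^ (k - j)) p) with hEdef
    have hElen : E.length = k + 1 := by simp [hEdef]
    have hEget : ∀ (i : ℕ) (h : i < E.length),
        E[i] = if i = k then q else (g ^ (k - i)) p := by
      intro i h
      simp [hEdef]
    have hEnd : E.Nodup := by
      rw [hEdef]
      refine List.Nodup.map_on ?_ (List.nodup_range (n := k+1))
      intro i hi j hj hij
      simp only [List.mem_range] at hi hj
      by_contra hne
      by_cases hik : i = k <;> by_cases hjk : j = k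
      · omega
      · rw [if_pos hik, if_neg hjk] at hij
        rcases Nat.lt_or_ge (k - j) k with h | h
        · exact (hmin (k - j) (by omega) h).1 hij.symm
        · have hkj : k - j = k := by omega
          rw [hkj, hcase] at hij
          exact hpq hij
      · rw [if_pos hjk, if_neg hik] at hij
        rcases Nat.lt_or_ge (k - i) k with h | h
        · exact (hmin (k - i) (by omega) h).1 hij
        · have hki : k - i = k := by omega
          rw [hki, hcase] at hij
          exact hpq hij.symm
      · rw [if_neg hik, if_neg hjk] at hij
        rcases lt_or_gt_of_ne hne with h | h
        · exact horb2 (k - j) (k - i) (by omega) (by omega) (by omega) hij.symm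
        · exact horb2 (k - i) (k - j) (by omega) (by omega) (by omega) hij
    have hmemE : ∀ z, z ∈ E ↔ (z = q ∨ ∃ j, 0 < j ∧ j ≤ k ∧ (g ^ j) p = z) := by
      intro z
      rw [hEdef]
      simp only [List.mem_map, List.mem_range]
      constructor
      · rintro ⟨j, hj, rfl⟩
        by_cases hjk : j = k
        · rw [if_pos hjk]
          exact Or.inl rfl
        · rw [if_neg hjk]
          exact Or.inr ⟨k - j, by omega, by omega, rfl⟩
      · rintro (rfl | ⟨j, hj0, hjk, rfl⟩)
        · exact ⟨k, by omega, by rw [if_pos rfl]⟩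
        · refine ⟨k - j, by omega, ?_⟩
          rw [if_neg (by omega : ¬ k - j = k), Nat.sub_sub_self hjk]
    have hdnot : ∀ z, z ∉ E → E.formPerm z = z := fun z h =>
      List.formPerm_apply_of_notMem h
    have hdj : ∀ j : ℕ, 2 ≤ j → j ≤ k → E.formPerm ((g ^ j) p) = (g ^ (j - 1)) p := by
      intro j h2 hk'
      have hi : k - j < E.length := by omega
      have h1 := List.formPerm_apply_getElem E hEnd (k - j) hi
      rw [hEget _ hi, if_neg (by omega : ¬ k - j = k), Nat.sub_sub_self (by omega)] at h1
      rw [h1, hEget]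
      rw [hElen]
      have hmod : (k - j + 1) % (k + 1) = k - j + 1 := Nat.mod_eq_of_lt (by omega)
      rw [hmod, if_neg (by omega : ¬ k - j + 1 = k)]
      have hkj : k - (k - j + 1) = j - 1 := by omega
      rw [hkj]
    have hd2 : E.formPerm (g p) = q := by
      have hi : k - 1 < E.length := by omega
      have h1 := List.formPerm_apply_getElem E hEnd (k - 1) hi
      rw [hEget _ hi, if_neg (by omega : ¬ k - 1 = k), Nat.sub_sub_self (by omega),
        pow_one] at h1
      rw [h1, hEget]
      rw [hElen]
      have hmod : (k - 1 + 1) % (k + 1) = k := by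
        have hk1 : k - 1 + 1 = k := by omega
        rw [hk1]
        exact Nat.mod_eq_of_lt (by omega)
      rw [hmod, if_pos rfl]
    have hd3 : E.formPerm q = p := by
      have hi : k < E.length := by omega
      have h1 := List.formPerm_apply_getElem E hEnd k hi
      rw [hEget _ hi, if_pos rfl] at h1
      rw [h1, hEget]
      rw [hElen]
      have hmod : (k + 1) % (k + 1) = 0 := Nat.mod_self _
      rw [hmod, if_neg (by omega : ¬ 0 = k), Nat.sub_zero, hcase]
    have hpt : ∀ i, Su (σ i) i + Tvw (τ i) i
        = Sw ((σ.trans L.formPerm) i) i + Tuv ((τ.trans E.formPerm) i) i := by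
      intro i
      simp only [Equiv.trans_apply]
      rw [hgσ i]
      by_cases hyL : σ i ∈ L
      · obtain ⟨j, hj, hjy⟩ := (hmemL _).mp hyL
        rw [← hjy, hstep j]
        have eqS : Sw (L.formPerm ((g ^ j) p)) = Tvw ((g ^ (j + 1)) p) := by
          rw [hcj j hj]
          by_cases hjk : j + 1 = k
          · rw [hjk, Nat.mod_self, pow_zero, hcase]
            simp only [Equiv.Perm.one_apply]
            rw [hTvwp]
          · have hmod : (j + 1) % k = j + 1 := Nat.mod_eq_of_lt (by omega)
            rw [hmod]
            have hne := hmin (j + 1) (by omega) (by omega)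
            rw [hSw _ hne.2, hTvw _ hne.2 hne.1]
        have eqT : Tuv (E.formPerm ((g ^ (j + 1)) p)) = Su ((g ^ j) p) := by
          by_cases hj0 : j = 0
          · subst hj0
            rw [pow_one, hd2, hTuvq, pow_zero]
            simp
          · rw [hdj (j + 1) (by omega) (by omega), Nat.add_sub_cancel]
            have hne := hmin j (by omega) hj
            rw [hTuv _ hne.2 hne.1]
        rw [eqS, eqT]
        ring
      · have h1 : Sw (σ i) = Su (σ i) := hSw _ (fun h => hyL (by rw [h]; exact hpL))
        rw [hcnot _ hyL, h1]
        by_cases hgq : g (σ i) = q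
        · rw [hgq, hd3, hTuvp, hTvwq]
        · have hgE : g (σ i) ∉ E := by
            intro hmem
            rcases (hmemE _).mp hmem with h | ⟨j, hj0, hjk, hjy⟩
            · exact hgq h
            · apply hyL
              refine (hmemL _).mpr ⟨j - 1, by omega, ?_⟩
              apply g.injective
              rw [hstep (j - 1)]
              have hj1 : j - 1 + 1 = j := by omega
              rw [hj1, hjy]
          rw [hdnot _ hgE]
          have hgp : g (σ i) ≠ p := by
            intro h
            exact hgE ((hmemE _).mpr (Or.inr ⟨k, hk0, le_refl k, by rw [hcase, h]⟩))
          rw [hTuv _ hgp hgq, hTvw _ hgp hgq]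
    have hsum : upCols Su + upCols Tvw
        = ∑ i, Sw ((σ.trans L.formPerm) i) i + ∑ i, Tuv ((τ.trans E.formPerm) i) i := by
      rw [hσ, hτ, ← Finset.sum_add_distrib, ← Finset.sum_add_distrib]
      exact Finset.sum_congr rfl fun i _ => hpt i
    rw [hsum]
    exact le_trans (add_le_add (le_upCols Sw _) (le_upCols Tuv _)) (le_max_right _ _)

lemma upCols_T_swap {N : ℕ} (a' : Fin N → Fin (N + 2) → ℝ) (x y : Fin (N + 2) → ℝ) :
    upCols (Fin.snoc (Fin.snoc a' x) y) = upCols (Fin.snoc (Fin.snoc a' y) x) := by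
  have h : (fun j => (Fin.snoc (Fin.snoc a' y) x : Fin (N + 2) → Fin (N + 2) → ℝ)
      (Equiv.swap ((Fin.last N).castSucc) (Fin.last (N + 1)) j))
      = (Fin.snoc (Fin.snoc a' x) y : Fin (N + 2) → Fin (N + 2) → ℝ) := by
    funext z
    by_cases hq : z = (Fin.last N).castSucc
    · subst hq
      rw [Equiv.swap_apply_left]
      simp
    · by_cases hp : z = Fin.last (N + 1)
      · subst hp
        rw [Equiv.swap_apply_right]
        simp
      · rw [Equiv.swap_apply_of_ne_of_ne hq hp]
        exact T_apply_ne a' y x x y z hq hp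
  rw [← h, upCols_comp]

lemma hirota_key (N : ℕ) (a : Fin (N + 1) → Fin (N + 2) → ℝ) (u v w : Fin (N + 2) → ℝ) :
    upCols (Fin.snoc a u) + upCols (Fin.snoc (Fin.snoc (fun i : Fin N => a i.castSucc) v) w) ≤
      max (upCols (Fin.snoc a v) +
            upCols (Fin.snoc (Fin.snoc (fun i : Fin N => a i.castSucc) u) w))
          (upCols (Fin.snoc a w) +
            upCols (Fin.snoc (Fin.snoc (fun i : Fin N => a i.castSucc) u) v)) := by
  have hpq : ((Fin.last N).castSucc : Fin (N + 2)) ≠ Fin.last (N + 1) := by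
    simp [Fin.ext_iff]
  exact key_abstract (Fin.last (N + 1)) ((Fin.last N).castSucc) hpq
    (Fin.snoc a u) (Fin.snoc a v) (Fin.snoc a w)
    (Fin.snoc (Fin.snoc (fun i : Fin N => a i.castSucc) v) w)
    (Fin.snoc (Fin.snoc (fun i : Fin N => a i.castSucc) u) w)
    (Fin.snoc (Fin.snoc (fun i : Fin N => a i.castSucc) u) v)
    (fun z hz => S_apply_ne a v u z hz)
    (fun z hz => S_apply_ne a w u z hz)
    (fun z hp hq => (ST_apply_ne a u v w z hq hp).symm)
    (fun z hp hq => (ST_apply_ne a u u w z hq hp).symm)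
    (fun z hp hq => (ST_apply_ne a u u v z hq hp).symm)
    (by simp) (by simp) (by simp) (by simp) (by simp) (by simp)


/-- Hirota's identity for ultradiscrete permanents.  The ambient dimension is `N + 2`
(so that there are `N + 1` vectors `a_1, …, a_{N+1}`, corresponding to the statement
with dimension `≥ 2`).  `S_j = max[a_1 … a_{N+1} b_j]` and
`T_{jk} = max[a_1 … a_N b_j b_k]`. -/
theorem hirota_identity (N : ℕ) (a : Fin (N + 1) → Fin (N + 2) → ℝ)
    (b₁ b₂ b₃ : Fin (N + 2) → ℝ) :
    max (upCols (Fin.snoc a b₁) +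
          upCols (Fin.snoc (Fin.snoc (fun i : Fin N => a i.castSucc) b₂) b₃))
        (upCols (Fin.snoc a b₂) +
          upCols (Fin.snoc (Fin.snoc (fun i : Fin N => a i.castSucc) b₁) b₃)) =
      max (upCols (Fin.snoc a b₁) +
            upCols (Fin.snoc (Fin.snoc (fun i : Fin N => a i.castSucc) b₂) b₃))
          (upCols (Fin.snoc a b₃) +
            upCols (Fin.snoc (Fin.snoc (fun i : Fin N => a i.castSucc) b₁) b₂)) ∧
    max (upCols (Fin.snoc a b₁) +
          upCols (Fin.snoc (Fin.snoc (fun i : Fin N => a i.castSucc) b₂) b₃))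
        (upCols (Fin.snoc a b₃) +
          upCols (Fin.snoc (Fin.snoc (fun i : Fin N => a i.castSucc) b₁) b₂)) =
      max (upCols (Fin.snoc a b₂) +
            upCols (Fin.snoc (Fin.snoc (fun i : Fin N => a i.castSucc) b₁) b₃))
          (upCols (Fin.snoc a b₃) +
            upCols (Fin.snoc (Fin.snoc (fun i : Fin N => a i.castSucc) b₁) b₂)) := by
  have h1 := hirota_key N a b₁ b₂ b₃
  have h2 := hirota_key N a b₂ b₁ b₃
  have h3 := hirota_key N a b₃ b₁ b₂
  rw [upCols_T_swap (fun i : Fin N => a i.castSucc) b₂ b₁] at h2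
  rw [upCols_T_swap (fun i : Fin N => a i.castSucc) b₃ b₂,
    upCols_T_swap (fun i : Fin N => a i.castSucc) b₃ b₁] at h3
  constructor
  · exact le_antisymm (max_le (le_max_left _ _) h2) (max_le (le_max_left _ _) h3)
  · exact le_antisymm (max_le h1 (le_max_right _ _)) (max_le h2 (le_max_right _ _))
end

section
/- Let N ≥ 2 be an integer and let a_1,…,a_{N−1}, b_1, b_2, b_3 be arbitrary N-dimensional real vectors. Set S_j = max[a_1 … a_{N−1} b_j] for j = 1,2,3 and T_{jk} = max[a_1 … a_{N−2} b_j b_k] for 1 ≤ j < k ≤ 3. Then S_1 + T_{23} ≤ max( S_2 + T_{13}, S_3 + T_{12} ). -/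
lemma upCols_eq {N : ℕ} (c : Fin N → Fin N → ℝ) :
    upCols c = Finset.univ.sup' ⟨1, Finset.mem_univ 1⟩
      (fun π : Equiv.Perm (Fin N) => ∑ i, c (π i) i) := rfl

open Function

lemma snoc_inj {n : ℕ} {α : Type*} {f : Fin n → α} {x : α}
    (hf : Injective f) (hx : x ∉ Set.range f) : Injective (Fin.snoc f x) := by
  intro i j h
  induction i using Fin.lastCases with
  | last =>
    induction j using Fin.lastCases with
    | last => rfl
    | cast j =>
      rw [Fin.snoc_last, Fin.snoc_castSucc] at h
      exact absurd ⟨j, h.symm⟩ hx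
  | cast i =>
    induction j using Fin.lastCases with
    | last =>
      rw [Fin.snoc_last, Fin.snoc_castSucc] at h
      exact absurd ⟨i, h⟩ hx
    | cast j =>
      rw [Fin.snoc_castSucc, Fin.snoc_castSucc] at h
      rw [hf h]

section Main

variable {N : ℕ}

/-- the `a`-columns-with-`b j` map into the common column type. -/
def eS (N : ℕ) (j : Fin 3) : Fin (N + 2) → (Fin (N + 1)) ⊕ (Fin 3) :=
  Fin.snoc (fun i : Fin (N + 1) => Sum.inl i) (Sum.inr j)

def eT (N : ℕ) (j k : Fin 3) : Fin (N + 2) → (Fin (N + 1)) ⊕ (Fin 3) :=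
  Fin.snoc (Fin.snoc (fun i : Fin N => Sum.inl i.castSucc) (Sum.inr j)) (Sum.inr k)

lemma range_eS (j : Fin 3) :
    Set.range (eS N j) = {u | (∃ i : Fin (N + 1), u = Sum.inl i) ∨ u = Sum.inr j} := by
  ext u
  constructor
  · rintro ⟨s, rfl⟩
    induction s using Fin.lastCases with
    | last => right; simp [eS]
    | cast s => left; exact ⟨s, by simp [eS]⟩
  · rintro (⟨i, rfl⟩ | rfl)
    · exact ⟨i.castSucc, by simp [eS]⟩
    · exact ⟨Fin.last _, by simp [eS]⟩

lemma range_eT (j k : Fin 3) :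
    Set.range (eT N j k) =
      {u | (∃ i : Fin N, u = Sum.inl i.castSucc) ∨ u = Sum.inr j ∨ u = Sum.inr k} := by
  ext u
  constructor
  · rintro ⟨s, rfl⟩
    induction s using Fin.lastCases with
    | last => right; right; simp [eT]
    | cast s =>
      induction s using Fin.lastCases with
      | last => right; left; simp [eT]
      | cast s => left; exact ⟨s, by simp [eT]⟩
  · rintro (⟨i, rfl⟩ | rfl | rfl)
    · exact ⟨i.castSucc.castSucc, by simp [eT]⟩
    · exact ⟨(Fin.last N).castSucc, by simp [eT]⟩
    · exact ⟨Fin.last _, by simp [eT]⟩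

lemma eS_inj (j : Fin 3) : Injective (eS N j) := by
  apply snoc_inj
  · intro i₁ i₂ h; simpa using h
  · rintro ⟨i, h⟩; simp at h

lemma eT_inj {j k : Fin 3} (hjk : j ≠ k) : Injective (eT N j k) := by
  apply snoc_inj
  · apply snoc_inj
    · intro i₁ i₂ h
      simp only [Sum.inl.injEq] at h
      exact Fin.castSucc_injective _ h
    · rintro ⟨i, h⟩; simp at h
  · rintro ⟨s, h⟩
    induction s using Fin.lastCases with
    | last => rw [Fin.snoc_last] at h; exact hjk (by simpa using h)
    | cast s => rw [Fin.snoc_castSucc] at h; simp at h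

end Main

lemma exists_perm_comp' {M : ℕ} {C : Type*} (u v : Fin M → C)
    (hu : Injective u) (hv : Injective v) (h : Set.range u = Set.range v) :
    ∃ π : Equiv.Perm (Fin M), ∀ r, v (π r) = u r := by
  refine ⟨(Equiv.ofInjective u hu).trans ((Equiv.setCongr h).trans
    (Equiv.ofInjective v hv).symm), fun r => ?_⟩
  simp only [Equiv.trans_apply]
  rw [Equiv.apply_ofInjective_symm hv]
  simp

lemma le_upCols_s7 {M : ℕ} {C : Type*} (V : C → Fin M → ℝ) (e w : Fin M → C)
    (he : Injective e) (hw : Injective w) (hr : Set.range w = Set.range e) :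
    (∑ i, V (w i) i) ≤ upCols (fun s => V (e s)) := by
  obtain ⟨π, hπ⟩ := exists_perm_comp' w e hw he hr
  rw [upCols_eq]
  calc (∑ i, V (w i) i) = ∑ i, V (e (π i)) i :=
        Finset.sum_congr rfl fun i _ => by rw [hπ]
    _ ≤ _ := Finset.le_sup' (fun π : Equiv.Perm (Fin M) => ∑ i, V ((fun s => e s) (π i)) i) (Finset.mem_univ π)


/-- Extend a pair of injections into a permutation of the codomain. -/
lemma exists_perm_extend {M : ℕ} {C : Type*} [Fintype C] [DecidableEq C]
    (f g : Fin M → C) (hf : Injective f) (hg : Injective g) :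
    ∃ β : Equiv.Perm C, ∀ r, β (f r) = g r := by
  classical
  let e : {x // x ∈ Set.range f} ≃ {x // x ∈ Set.range g} :=
    (Equiv.ofInjective f hf).symm.trans (Equiv.ofInjective g hg)
  refine ⟨e.extendSubtype, fun r => ?_⟩
  rw [Equiv.extendSubtype_apply_of_mem e (f r) ⟨r, rfl⟩]
  show ((Equiv.ofInjective g hg) ((Equiv.ofInjective f hf).symm ⟨f r, ⟨r, rfl⟩⟩) : C) = g r
  rw [Equiv.ofInjective_symm_apply]
  simp

/-- Given two injections with equal range, one is the other precomposed with a permutation. -/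
lemma exists_perm_comp {M : ℕ} {C : Type*} (u v : Fin M → C)
    (hu : Injective u) (hv : Injective v) (h : Set.range u = Set.range v) :
    ∃ π : Equiv.Perm (Fin M), ∀ r, v (π r) = u r := by
  refine ⟨(Equiv.ofInjective u hu).trans ((Equiv.setCongr h).trans
    (Equiv.ofInjective v hv).symm), fun r => ?_⟩
  simp only [Equiv.trans_apply]
  rw [Equiv.apply_ofInjective_symm hv]
  simp

lemma swap_lemma {M : ℕ} {C : Type*} [Fintype C] [DecidableEq C]
    (Φ Ψ : Fin M → C) (hΦ : Injective Φ) (hΨ : Injective Ψ)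
    (β : Equiv.Perm C) (hβ : ∀ r, β (Φ r) = Ψ r)
    (x : C) (hxΦ : x ∈ Set.range Φ) (hxΨ : x ∉ Set.range Ψ) :
    ∃ (d : C) (Φ' Ψ' : Fin M → C),
      d ∈ Set.range Ψ ∧ d ∉ Set.range Φ ∧
      Injective Φ' ∧ Injective Ψ' ∧
      Set.range Φ' = (Set.range Φ \ {x}) ∪ {d} ∧
      Set.range Ψ' = (Set.range Ψ \ {d}) ∪ {x} ∧
      ∀ r, (Φ' r = Φ r ∧ Ψ' r = Ψ r) ∨ (Φ' r = Ψ r ∧ Ψ' r = Φ r) := by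
  classical
  set c : ℕ → C := fun i => (β ^ i) x with hc
  have hc0 : c 0 = x := by simp [hc]
  have hstep : ∀ i, c (i + 1) = β (c i) := by
    intro i; simp [hc, pow_succ', Equiv.Perm.mul_apply]
  have hexit : ∃ n, 0 < n ∧ c n ∉ Set.range Φ := by
    have hb1 : β ≠ 1 := by
      intro h
      obtain ⟨r, hr⟩ := hxΦ
      exact hxΨ ⟨r, by rw [← hβ r, h]; simpa using hr⟩
    have hord : 0 < orderOf β := orderOf_pos β
    have h2 : 2 ≤ orderOf β := by
      rcases Nat.lt_or_ge (orderOf β) 2 with h | h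
      · exfalso; apply hb1; rw [← orderOf_eq_one_iff]; omega
      · exact h
    refine ⟨orderOf β - 1, by omega, ?_⟩
    rintro ⟨r, hr⟩
    apply hxΨ
    refine ⟨r, ?_⟩
    have hm : c (orderOf β) = x := by simp [hc, pow_orderOf_eq_one]
    have h' : c (orderOf β) = β (c (orderOf β - 1)) := by
      rw [← hstep]; congr 1; omega
    rw [← hβ r, hr, ← h', hm]
  set k := Nat.find hexit with hk
  have hk0 : 0 < k := (Nat.find_spec hexit).1
  have hck : c k ∉ Set.range Φ := (Nat.find_spec hexit).2
  have hin : ∀ i, i < k → c i ∈ Set.range Φ := by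
    intro i hi
    rcases Nat.eq_zero_or_pos i with h0 | h0
    · subst h0; simpa [hc0] using hxΦ
    · by_contra h
      exact Nat.find_min hexit hi ⟨h0, h⟩
  have hcmemΨ : ∀ i, 0 < i → i ≤ k → c i ∈ Set.range Ψ := by
    intro i h0 hik
    obtain ⟨r, hr⟩ := hin (i - 1) (by omega)
    refine ⟨r, ?_⟩
    rw [← hβ r, hr, ← hstep]
    congr 1; omega
  have hdΨ : c k ∈ Set.range Ψ := hcmemΨ k hk0 le_rfl
  set S : Fin M → Prop := fun r => ∃ i, i < k ∧ Φ r = c i with hS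
  set Φ' : Fin M → C := fun r => if S r then Ψ r else Φ r with hΦ'
  set Ψ' : Fin M → C := fun r => if S r then Φ r else Ψ r with hΨ'
  have hnext : ∀ r i, Φ r = c i → Ψ r = c (i + 1) := by
    intro r i hr; rw [hstep, ← hr, hβ]
  have hcx : ∀ i, 0 < i → i ≤ k → c i ≠ x := by
    intro i h0 hik he; exact hxΨ (he ▸ hcmemΨ i h0 hik)
  have hprev : ∀ s i, 0 < i → i ≤ k → Ψ s = c i → Φ s = c (i - 1) := by
    intro s i h0 hik hs
    obtain ⟨r, hr⟩ := hin (i - 1) (by omega)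
    have h1 : Ψ r = c i := by
      rw [hnext r (i - 1) hr]; congr 1; omega
    have : s = r := hΨ (hs.trans h1.symm)
    rw [this, hr]
  have hΦ'inj : Injective Φ' := by
    intro r s h
    by_cases hr : S r <;> by_cases hs : S s <;>
      simp only [hΦ', if_pos, if_neg, hr, hs, if_true, if_false] at h
    · exact hΨ h
    · obtain ⟨i, hi, hri⟩ := hr
      have h1 : Φ s = c (i + 1) := by rw [← h, hnext r i hri]
      rcases Nat.lt_or_ge (i + 1) k with hlt | hge
      · exact absurd ⟨i + 1, hlt, h1⟩ hs
      · have : i + 1 = k := by omega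
        exact absurd ⟨s, h1⟩ (this ▸ hck)
    · obtain ⟨i, hi, hsi⟩ := hs
      have h1 : Φ r = c (i + 1) := by rw [h, hnext s i hsi]
      rcases Nat.lt_or_ge (i + 1) k with hlt | hge
      · exact absurd ⟨i + 1, hlt, h1⟩ hr
      · have : i + 1 = k := by omega
        exact absurd ⟨r, h1⟩ (this ▸ hck)
    · exact hΦ h
  have hΨ'inj : Injective Ψ' := by
    intro r s h
    by_cases hr : S r <;> by_cases hs : S s <;>
      simp only [hΨ', if_pos, if_neg, hr, hs, if_true, if_false] at h
    · exact hΦ h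
    · obtain ⟨i, hi, hri⟩ := hr
      rcases Nat.eq_zero_or_pos i with h0 | h0
      · subst h0
        exact absurd ⟨s, by rw [← h, hri, hc0]⟩ hxΨ
      · have h1 : Ψ s = c i := by rw [← h, hri]
        have h2 : Φ s = c (i - 1) := hprev s i h0 (le_of_lt hi) h1
        exact absurd ⟨i - 1, by omega, h2⟩ hs
    · obtain ⟨i, hi, hsi⟩ := hs
      rcases Nat.eq_zero_or_pos i with h0 | h0
      · subst h0
        exact absurd ⟨r, by rw [h, hsi, hc0]⟩ hxΨ
      · have h1 : Ψ r = c i := by rw [h, hsi]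
        have h2 : Φ r = c (i - 1) := hprev r i h0 (le_of_lt hi) h1
        exact absurd ⟨i - 1, by omega, h2⟩ hr
    · exact hΨ h
  have hrΦ' : Set.range Φ' = (Set.range Φ \ {x}) ∪ {c k} := by
    ext u
    constructor
    · rintro ⟨r, rfl⟩
      by_cases hr : S r
      · obtain ⟨i, hi, hri⟩ := hr
        have h1 : Φ' r = c (i + 1) := by
          rw [hΦ']; simp only [if_pos (⟨i, hi, hri⟩ : S r)]
          exact (if_pos (show S r from ⟨i, hi, hri⟩)).trans (hnext r i hri)
        rcases Nat.lt_or_ge (i + 1) k with hlt | hge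
        · left
          rw [h1]
          exact ⟨hin _ hlt, hcx (i + 1) (by omega) (le_of_lt hlt)⟩
        · right
          have : i + 1 = k := by omega
          simp [h1, this]
      · have h1 : Φ' r = Φ r := by rw [hΦ']; simp only [if_neg hr]
        left
        rw [h1]
        refine ⟨⟨r, rfl⟩, ?_⟩
        intro he
        exact hr ⟨0, hk0, by rw [Set.mem_singleton_iff] at he; rw [he, hc0]⟩
    · rintro (⟨⟨r, rfl⟩, hne⟩ | he)
      · rw [Set.mem_singleton_iff] at hne
        by_cases hr : S r
        · obtain ⟨i, hi, hri⟩ := hr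
          have hipos : 0 < i := by
            rcases Nat.eq_zero_or_pos i with h0 | h0
            · exact absurd (by rw [hri, h0, hc0]) hne
            · exact h0
          obtain ⟨s, hs⟩ := hin (i - 1) (by omega)
          have hsS : S s := ⟨i - 1, by omega, hs⟩
          refine ⟨s, ?_⟩
          rw [hΦ']; simp only [if_pos hsS]
          rw [hnext s (i - 1) hs, hri]
          congr 1; omega
        · exact ⟨r, by rw [hΦ']; simp only [if_neg hr]⟩
      · rw [Set.mem_singleton_iff] at he
        obtain ⟨s, hs⟩ := hin (k - 1) (by omega)
        have hsS : S s := ⟨k - 1, by omega, hs⟩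
        refine ⟨s, ?_⟩
        rw [hΦ']; simp only [if_pos hsS]
        rw [hnext s (k - 1) hs, he]
        congr 1; omega
  have hrΨ' : Set.range Ψ' = (Set.range Ψ \ {c k}) ∪ {x} := by
    ext u
    constructor
    · rintro ⟨r, rfl⟩
      by_cases hr : S r
      · obtain ⟨i, hi, hri⟩ := hr
        have h1 : Ψ' r = c i := by
          rw [hΨ']; simp only [if_pos (⟨i, hi, hri⟩ : S r)]; exact (if_pos (show S r from ⟨i, hi, hri⟩)).trans hri
        rcases Nat.eq_zero_or_pos i with h0 | h0
        · right; simp [h1, h0, hc0]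
        · left
          rw [h1]
          refine ⟨hcmemΨ i h0 (le_of_lt hi), ?_⟩
          intro he
          rw [Set.mem_singleton_iff] at he
          exact hck (he ▸ hin i hi)
      · have h1 : Ψ' r = Ψ r := by rw [hΨ']; simp only [if_neg hr]
        left
        rw [h1]
        refine ⟨⟨r, rfl⟩, ?_⟩
        intro he
        rw [Set.mem_singleton_iff] at he
        have := hprev r k hk0 le_rfl he
        exact hr ⟨k - 1, by omega, this⟩
    · rintro (⟨⟨r, rfl⟩, hne⟩ | he)
      · rw [Set.mem_singleton_iff] at hne
        by_cases hr : S r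
        · obtain ⟨i, hi, hri⟩ := hr
          have h1 : Ψ r = c (i + 1) := hnext r i hri
          have hik : i + 1 < k := by
            rcases Nat.lt_or_ge (i + 1) k with hlt | hge
            · exact hlt
            · exfalso; apply hne; rw [h1]; congr 1; omega
          obtain ⟨s, hs⟩ := hin (i + 1) hik
          have hsS : S s := ⟨i + 1, hik, hs⟩
          refine ⟨s, ?_⟩
          rw [hΨ']; simp only [if_pos hsS]
          rw [hs, h1]
        · exact ⟨r, by rw [hΨ']; simp only [if_neg hr]⟩
      · rw [Set.mem_singleton_iff] at he
        obtain ⟨r, hr⟩ := hxΦ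
        have hrS : S r := ⟨0, hk0, by rw [hr, hc0]⟩
        refine ⟨r, ?_⟩
        rw [hΨ']; simp only [if_pos hrS]
        rw [hr, he]
  refine ⟨c k, Φ', Ψ', hdΨ, hck, hΦ'inj, hΨ'inj, hrΦ', hrΨ', fun r => ?_⟩
  by_cases hr : S r
  · right; constructor <;> simp [hΦ', hΨ', if_pos hr]
  · left; constructor <;> simp [hΦ', hΨ', if_neg hr]


lemma main_ineq (N : ℕ) (a : Fin (N + 1) → Fin (N + 2) → ℝ) (b : Fin 3 → Fin (N + 2) → ℝ) :
    upCols (Fin.snoc a (b 0)) +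
        upCols (Fin.snoc (Fin.snoc (fun i : Fin N => a i.castSucc) (b 1)) (b 2)) ≤
      max (upCols (Fin.snoc a (b 1)) +
            upCols (Fin.snoc (Fin.snoc (fun i : Fin N => a i.castSucc) (b 0)) (b 2)))
          (upCols (Fin.snoc a (b 2)) +
            upCols (Fin.snoc (Fin.snoc (fun i : Fin N => a i.castSucc) (b 0)) (b 1))) := by
  classical
  set V : (Fin (N + 1)) ⊕ (Fin 3) → Fin (N + 2) → ℝ := Sum.elim a b with hV
  have hVS : ∀ j : Fin 3, Fin.snoc a (b j) = fun s => V (eS N j s) := by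
    intro j; funext s
    induction s using Fin.lastCases with
    | last => simp [eS, hV]
    | cast s => simp [eS, hV]
  have hVT : ∀ j k : Fin 3,
      Fin.snoc (Fin.snoc (fun i : Fin N => a i.castSucc) (b j)) (b k)
        = fun s => V (eT N j k s) := by
    intro j k; funext s
    induction s using Fin.lastCases with
    | last => simp [eT, hV]
    | cast s =>
      induction s using Fin.lastCases with
      | last => simp [eT, hV]
      | cast s => simp [eT, hV]
  obtain ⟨σ, -, hσ⟩ := Finset.exists_mem_eq_sup'
    (⟨1, Finset.mem_univ 1⟩ : (Finset.univ : Finset (Equiv.Perm (Fin (N + 2)))).Nonempty)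
    (fun π : Equiv.Perm (Fin (N + 2)) => ∑ i, (Fin.snoc a (b 0) : Fin (N + 2) → Fin (N + 2) → ℝ) (π i) i)
  obtain ⟨τ, -, hτ⟩ := Finset.exists_mem_eq_sup'
    (⟨1, Finset.mem_univ 1⟩ : (Finset.univ : Finset (Equiv.Perm (Fin (N + 2)))).Nonempty)
    (fun π : Equiv.Perm (Fin (N + 2)) =>
      ∑ i, (Fin.snoc (Fin.snoc (fun i : Fin N => a i.castSucc) (b 1)) (b 2) : Fin (N + 2) → Fin (N + 2) → ℝ) (π i) i)
  set Φ : Fin (N + 2) → (Fin (N + 1)) ⊕ (Fin 3) := fun r => eS N 0 (σ r) with hΦdef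
  set Ψ : Fin (N + 2) → (Fin (N + 1)) ⊕ (Fin 3) := fun r => eT N 1 2 (τ r) with hΨdef
  have hΦinj : Injective Φ := (eS_inj 0).comp σ.injective
  have hΨinj : Injective Ψ := (eT_inj (by decide)).comp τ.injective
  have hrangeΦ : Set.range Φ = Set.range (eS N 0) := by
    rw [show Φ = (eS N 0) ∘ σ from rfl, Set.range_comp, Equiv.range_eq_univ, Set.image_univ]
  have hrangeΨ : Set.range Ψ = Set.range (eT N 1 2) := by
    rw [show Ψ = (eT N 1 2) ∘ τ from rfl, Set.range_comp, Equiv.range_eq_univ, Set.image_univ]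
  obtain ⟨β, hβ⟩ := exists_perm_extend Φ Ψ hΦinj hΨinj
  have hxΦ : (Sum.inr 0 : (Fin (N + 1)) ⊕ (Fin 3)) ∈ Set.range Φ := by
    rw [hrangeΦ, range_eS]; exact Or.inr rfl
  have hxΨ : (Sum.inr 0 : (Fin (N + 1)) ⊕ (Fin 3)) ∉ Set.range Ψ := by
    rw [hrangeΨ, range_eT]
    rintro (⟨i, h⟩ | h | h) <;> simp_all
  obtain ⟨d, Φ', Ψ', hdΨ, hdΦ, hΦ'i, hΨ'i, hrΦ', hrΨ', hpt⟩ :=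
    swap_lemma Φ Ψ hΦinj hΨinj β hβ (Sum.inr 0) hxΦ hxΨ
  have hd12 : d = Sum.inr 1 ∨ d = Sum.inr 2 := by
    rw [hrangeΨ, range_eT] at hdΨ
    rcases hdΨ with ⟨i, rfl⟩ | h | h
    · exfalso; apply hdΦ; rw [hrangeΦ, range_eS]; exact Or.inl ⟨_, rfl⟩
    · exact Or.inl h
    · exact Or.inr h
  have hsum : (∑ i, V (Φ i) i) + (∑ i, V (Ψ i) i)
      = (∑ i, V (Φ' i) i) + (∑ i, V (Ψ' i) i) := by
    rw [← Finset.sum_add_distrib, ← Finset.sum_add_distrib]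
    refine Finset.sum_congr rfl fun r _ => ?_
    rcases hpt r with ⟨h1, h2⟩ | ⟨h1, h2⟩ <;> rw [h1, h2]
    exact (add_comm _ _).symm
  have hS0 : upCols (Fin.snoc a (b 0)) = ∑ i, V (Φ i) i := by
    rw [upCols_eq, hσ]
    exact Finset.sum_congr rfl fun i _ => by rw [hVS 0]
  have hT12 : upCols (Fin.snoc (Fin.snoc (fun i : Fin N => a i.castSucc) (b 1)) (b 2))
      = ∑ i, V (Ψ i) i := by
    rw [upCols_eq, hτ]
    exact Finset.sum_congr rfl fun i _ => by rw [hVT 1 2]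
  rw [hrangeΦ, range_eS] at hrΦ'
  rw [hrangeΨ, range_eT] at hrΨ'
  rcases hd12 with rfl | rfl
  · -- d = b₂ : bound by S₂ + T₁₃
    have r1 : Set.range Φ' = Set.range (eS N 1) := by
      rw [hrΦ', range_eS]
      ext u
      rcases u with i | t
      · simp
      · simp only [Set.mem_union, Set.mem_diff, Set.mem_setOf_eq, Set.mem_singleton_iff,
          Sum.inr.injEq]
        constructor
        · rintro (⟨(⟨i, h⟩ | h), hne⟩ | h)
          · exact absurd h (by simp)
          · exact absurd (by simpa using h) (by simpa using hne)
          · exact Or.inr h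
        · rintro (⟨i, h⟩ | h)
          · exact absurd h (by simp)
          · exact Or.inr h
    have r2 : Set.range Ψ' = Set.range (eT N 0 2) := by
      rw [hrΨ', range_eT]
      ext u
      rcases u with i | t
      · simp
      · simp only [Set.mem_union, Set.mem_diff, Set.mem_setOf_eq, Set.mem_singleton_iff,
          Sum.inr.injEq]
        constructor
        · rintro (⟨(⟨i, h⟩ | h | h), hne⟩ | h)
          · exact absurd h (by simp)
          · exact absurd (by simpa using h) (by simpa using hne)
          · exact Or.inr (Or.inr h)
          · exact Or.inr (Or.inl h)
        · rintro (⟨i, h⟩ | h | h)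
          · exact absurd h (by simp)
          · exact Or.inr h
          · exact Or.inl ⟨Or.inr (Or.inr h), by rw [h]; decide⟩
    have key1 : (∑ i, V (Φ' i) i) ≤ upCols (Fin.snoc a (b 1)) := by
      rw [hVS 1]
      exact le_upCols_s7 V (eS N 1) Φ' (eS_inj 1) hΦ'i r1
    have key2 : (∑ i, V (Ψ' i) i)
        ≤ upCols (Fin.snoc (Fin.snoc (fun i : Fin N => a i.castSucc) (b 0)) (b 2)) := by
      rw [hVT 0 2]
      exact le_upCols_s7 V (eT N 0 2) Ψ' (eT_inj (by decide)) hΨ'i r2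
    refine le_trans ?_ (le_max_left _ _)
    rw [hS0, hT12, hsum]
    exact add_le_add key1 key2
  · -- d = b₃ : bound by S₃ + T₁₂
    have r1 : Set.range Φ' = Set.range (eS N 2) := by
      rw [hrΦ', range_eS]
      ext u
      rcases u with i | t
      · simp
      · simp only [Set.mem_union, Set.mem_diff, Set.mem_setOf_eq, Set.mem_singleton_iff,
          Sum.inr.injEq]
        constructor
        · rintro (⟨(⟨i, h⟩ | h), hne⟩ | h)
          · exact absurd h (by simp)
          · exact absurd (by simpa using h) (by simpa using hne)
          · exact Or.inr h
        · rintro (⟨i, h⟩ | h)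
          · exact absurd h (by simp)
          · exact Or.inr h
    have r2 : Set.range Ψ' = Set.range (eT N 0 1) := by
      rw [hrΨ', range_eT]
      ext u
      rcases u with i | t
      · simp
      · simp only [Set.mem_union, Set.mem_diff, Set.mem_setOf_eq, Set.mem_singleton_iff,
          Sum.inr.injEq]
        constructor
        · rintro (⟨(⟨i, h⟩ | h | h), hne⟩ | h)
          · exact absurd h (by simp)
          · exact Or.inr (Or.inr h)
          · exact absurd (by simpa using h) (by simpa using hne)
          · exact Or.inr (Or.inl h)
        · rintro (⟨i, h⟩ | h | h)
          · exact absurd h (by simp)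
          · exact Or.inr h
          · exact Or.inl ⟨Or.inr (Or.inl h), by rw [h]; decide⟩
    have key1 : (∑ i, V (Φ' i) i) ≤ upCols (Fin.snoc a (b 2)) := by
      rw [hVS 2]
      exact le_upCols_s7 V (eS N 2) Φ' (eS_inj 2) hΦ'i r1
    have key2 : (∑ i, V (Ψ' i) i)
        ≤ upCols (Fin.snoc (Fin.snoc (fun i : Fin N => a i.castSucc) (b 0)) (b 1)) := by
      rw [hVT 0 1]
      exact le_upCols_s7 V (eT N 0 1) Ψ' (eT_inj (by decide)) hΨ'i r2
    refine le_trans ?_ (le_max_right _ _)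
    rw [hS0, hT12, hsum]
    exact add_le_add key1 key2


/-- `S_1 + T_{23} ≤ max (S_2 + T_{13}) (S_3 + T_{12})` for ultradiscrete permanents.
The ambient dimension is `N + 2` (so that there are `N + 1` vectors `a_1, …, a_{N+1}`,
corresponding to the statement with dimension `≥ 2`).  Here
`S_j = max[a_1 … a_{N+1} b_j]` and `T_{jk} = max[a_1 … a_N b_j b_k]`. -/
theorem up_ineq (N : ℕ) (a : Fin (N + 1) → Fin (N + 2) → ℝ)
    (b₁ b₂ b₃ : Fin (N + 2) → ℝ) :
    upCols (Fin.snoc a b₁) +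
        upCols (Fin.snoc (Fin.snoc (fun i : Fin N => a i.castSucc) b₂) b₃) ≤
      max (upCols (Fin.snoc a b₂) +
            upCols (Fin.snoc (Fin.snoc (fun i : Fin N => a i.castSucc) b₁) b₃))
          (upCols (Fin.snoc a b₃) +
            upCols (Fin.snoc (Fin.snoc (fun i : Fin N => a i.castSucc) b₁) b₂)) := by
  simpa using main_ineq N a ![b₁, b₂, b₃]
end

section
/- (Lemma 3-1) Let N ≥ 2 be an integer, let M be an N×(N−2) real matrix with columns m_1,…,m_{N−2}, and let u, v, w be N-dimensional real vectors such that for all indices i_1 ≠ i_2 in {1,…,N}: u_{i_1} + u_{i_2} ≤ max( v_{i_1} + w_{i_2}, v_{i_2} + w_{i_1} ). Then max[m_1 … m_{N−2} u u] ≤ max[m_1 … m_{N−2} v w]. -/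
private lemma sum_le_two_point {n : ℕ} (f g : Fin n → ℝ) (a b : Fin n) (hab : a ≠ b)
    (hne : ∀ i, i ≠ a → i ≠ b → f i = g i) (hab2 : f a + f b ≤ g a + g b) :
    ∑ i, f i ≤ ∑ i, g i := by
  classical
  have ha : a ∈ Finset.univ := Finset.mem_univ a
  have hb : b ∈ (Finset.univ : Finset (Fin n)).erase a :=
    Finset.mem_erase.mpr ⟨fun hh => hab hh.symm, Finset.mem_univ b⟩
  have split : ∀ F : Fin n → ℝ,
      ∑ i, F i = (∑ i ∈ ((Finset.univ : Finset (Fin n)).erase a).erase b, F i) + F b + F a := by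
    intro F
    rw [← Finset.sum_erase_add _ _ ha, ← Finset.sum_erase_add _ _ hb]
  rw [split f, split g]
  have hsum : ∑ i ∈ ((Finset.univ : Finset (Fin n)).erase a).erase b, f i
      = ∑ i ∈ ((Finset.univ : Finset (Fin n)).erase a).erase b, g i := by
    apply Finset.sum_congr rfl
    intro i hi
    simp only [Finset.mem_erase] at hi
    exact hne i hi.2.1 hi.1
  rw [hsum]
  linarith

/-- Lemma 3-1.  The ambient dimension is `N + 2` (corresponding to the statement with
dimension `≥ 2`), `M` is the `(N+2) × N` matrix with columns `m_1, …, m_N`, and `u, v, w`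
are `(N+2)`-dimensional vectors satisfying the stated pairwise inequality.  Then
`max[m_1 … m_N u u] ≤ max[m_1 … m_N v w]`. -/
theorem lemma3_1 (N : ℕ) (M : Fin N → Fin (N + 2) → ℝ) (u v w : Fin (N + 2) → ℝ)
    (h : ∀ i₁ i₂ : Fin (N + 2), i₁ ≠ i₂ →
      u i₁ + u i₂ ≤ max (v i₁ + w i₂) (v i₂ + w i₁)) :
    upCols (Fin.snoc (Fin.snoc M u) u) ≤ upCols (Fin.snoc (Fin.snoc M v) w) := by
  classical
  set cN : Fin (N + 2) := (Fin.last N).castSucc with hcN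
  set cL : Fin (N + 2) := Fin.last (N + 1) with hcL
  have hcNL : cN ≠ cL := by
    simp [hcN, hcL, Fin.ext_iff]
  -- evaluation lemmas
  have evU : ∀ x : Fin (N + 2), x ≠ cN → x ≠ cL →
      (Fin.snoc (Fin.snoc M u) u : Fin (N + 2) → Fin (N + 2) → ℝ) x
        = (Fin.snoc (Fin.snoc M v) w : Fin (N + 2) → Fin (N + 2) → ℝ) x := by
    intro x hxN hxL
    obtain ⟨y, rfl⟩ := Fin.exists_castSucc_eq.mpr hxL
    have hy : y ≠ Fin.last N := fun hh => hxN (by rw [hh])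
    obtain ⟨z, rfl⟩ := Fin.exists_castSucc_eq.mpr hy
    simp [Fin.snoc_castSucc]
  have evUN : (Fin.snoc (Fin.snoc M u) u : Fin (N + 2) → Fin (N + 2) → ℝ) cN = u := by
    simp [hcN, Fin.snoc_castSucc, Fin.snoc_last]
  have evUL : (Fin.snoc (Fin.snoc M u) u : Fin (N + 2) → Fin (N + 2) → ℝ) cL = u := by
    simp [hcL, Fin.snoc_last]
  have evVN : (Fin.snoc (Fin.snoc M v) w : Fin (N + 2) → Fin (N + 2) → ℝ) cN = v := by
    simp [hcN, Fin.snoc_castSucc, Fin.snoc_last]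
  have evWL : (Fin.snoc (Fin.snoc M v) w : Fin (N + 2) → Fin (N + 2) → ℝ) cL = w := by
    simp [hcL, Fin.snoc_last]
  simp only [upCols, uperm]
  apply Finset.sup'_le
  intro π _
  set a : Fin (N + 2) := π.symm cN with ha
  set b : Fin (N + 2) := π.symm cL with hb
  have hab : a ≠ b := fun hh => hcNL (π.symm.injective hh)
  have hπa : π a = cN := π.apply_symm_apply cN
  have hπb : π b = cL := π.apply_symm_apply cL
  have key := h a b hab
  rcases le_max_iff.mp key with hcase | hcase
  · -- use π itself
    refine le_trans ?_ (Finset.le_sup' _ (Finset.mem_univ π))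
    apply sum_le_two_point _ _ a b hab
    · intro i hia hib
      have h1 : π i ≠ cN := fun hh => hia (by rw [ha, ← hh, Equiv.symm_apply_apply])
      have h2 : π i ≠ cL := fun hh => hib (by rw [hb, ← hh, Equiv.symm_apply_apply])
      simp only [Matrix.of_apply]
      rw [evU (π i) h1 h2]
    · simp only [Matrix.of_apply, hπa, hπb, evUN, evUL, evVN, evWL]
      exact hcase
  · -- use π followed by swapping the two last columns
    refine le_trans ?_ (Finset.le_sup' _ (Finset.mem_univ (π.trans (Equiv.swap cN cL))))
    apply sum_le_two_point _ _ a b hab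
    · intro i hia hib
      have h1 : π i ≠ cN := fun hh => hia (by rw [ha, ← hh, Equiv.symm_apply_apply])
      have h2 : π i ≠ cL := fun hh => hib (by rw [hb, ← hh, Equiv.symm_apply_apply])
      simp only [Matrix.of_apply, Equiv.trans_apply, Equiv.swap_apply_of_ne_of_ne h1 h2]
      rw [evU (π i) h1 h2]
    · simp only [Matrix.of_apply, Equiv.trans_apply, hπa, hπb,
        Equiv.swap_apply_left, Equiv.swap_apply_right, evUN, evUL, evVN, evWL]
      linarith
end

section
/- In the uKP setting, for every index i ∈ {1,…,N} and all integers l, m, n, σ, the three dispersion relations hold: φ_i(l+1,m,n,σ) = max( φ_i(l,m,n,σ), φ_i(l,m,n,σ+1) − a_1 ); φ_i(l,m+1,n,σ) = max( φ_i(l,m,n,σ), φ_i(l,m,n,σ+1) − a_2 ); and φ_i(l,m,n+1,σ) = max( φ_i(l,m,n,σ), φ_i(l,m,n,σ+1) − a_3 ). -/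
/-- uKP setting: `φ_i(l,m,n,σ) = max(η_i(l,m,n,σ), η'_i(l,m,n,σ))`. -/
noncomputable def phiKP {N : ℕ} (a₁ a₂ a₃ : ℝ) (p c c' : Fin N → ℝ)
    (i : Fin N) (l m n σ : ℤ) : ℝ :=
  max
    (p i * (σ : ℝ) + max 0 (p i - a₁) * (l : ℝ) + max 0 (p i - a₂) * (m : ℝ) +
      max 0 (p i - a₃) * (n : ℝ) + c i)
    (-p i * (σ : ℝ) + max 0 (-p i - a₁) * (l : ℝ) + max 0 (-p i - a₂) * (m : ℝ) +
      max 0 (-p i - a₃) * (n : ℝ) + c' i)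

/-- uKP tau function: the ultradiscrete permanent of the `N × N` matrix with
`(i, j)` entry `φ_i(l, m, n, s + j - 1)` (with `j` running over `1, …, N`). -/
noncomputable def tauKP {N : ℕ} (a₁ a₂ a₃ : ℝ) (p c c' : Fin N → ℝ)
    (s l m n : ℤ) : ℝ :=
  uperm (Matrix.of fun i j : Fin N => phiKP a₁ a₂ a₃ p c c' i l m n (s + (j.1 : ℤ)))

/-- `τ_c(α, β)`: the ultradiscrete permanent of the `N × N` matrix whose columns are
the vectors `φ(l, m, n, s + j)` for `j ∈ {0, 1, …, N+1} ∖ {α, β}` (symmetric in `α, β`). -/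
noncomputable def taucKP {N : ℕ} (a₁ a₂ a₃ : ℝ) (p c c' : Fin N → ℝ)
    (s l m n : ℤ) (α β : ℤ) : ℝ :=
  uperm (Matrix.of fun i j : Fin N =>
    phiKP a₁ a₂ a₃ p c c' i l m n (s + omitTwo N 0 (min α β) (max α β) j))

private lemma key_max (x y p a : ℝ) :
    max (x + max 0 (p - a)) (y + max 0 (-p - a)) =
      max (max x y) (max (x + p) (y + -p) - a) := by
  rw [show x + max 0 (p - a) = max x (x + (p - a)) by
        rw [← max_add_add_left]; ring_nf,
      show y + max 0 (-p - a) = max y (y + (-p - a)) by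
        rw [← max_add_add_left]; ring_nf,
      max_max_max_comm]
  congr 1
  rw [show x + (p - a) = (x + p) - a by ring, show y + (-p - a) = (y + -p) - a by ring,
    max_sub_sub_right]

/-- The three dispersion relations for `φ` in the uKP setting. -/
theorem phiKP_dispersion (N : ℕ) (hN : 1 ≤ N) (a₁ a₂ a₃ : ℝ) (h₁₂ : a₂ < a₁) (h₂₃ : a₃ < a₂)
    (p c c' : Fin N → ℝ) (i : Fin N) (l m n σ : ℤ) :
    phiKP a₁ a₂ a₃ p c c' i (l + 1) m n σ =
        max (phiKP a₁ a₂ a₃ p c c' i l m n σ)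
          (phiKP a₁ a₂ a₃ p c c' i l m n (σ + 1) - a₁) ∧
    phiKP a₁ a₂ a₃ p c c' i l (m + 1) n σ =
        max (phiKP a₁ a₂ a₃ p c c' i l m n σ)
          (phiKP a₁ a₂ a₃ p c c' i l m n (σ + 1) - a₂) ∧
    phiKP a₁ a₂ a₃ p c c' i l m (n + 1) σ =
        max (phiKP a₁ a₂ a₃ p c c' i l m n σ)
          (phiKP a₁ a₂ a₃ p c c' i l m n (σ + 1) - a₃) := by
  set x : ℝ := p i * (σ : ℝ) + max 0 (p i - a₁) * (l : ℝ) + max 0 (p i - a₂) * (m : ℝ) +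
      max 0 (p i - a₃) * (n : ℝ) + c i with hx
  set y : ℝ := -p i * (σ : ℝ) + max 0 (-p i - a₁) * (l : ℝ) + max 0 (-p i - a₂) * (m : ℝ) +
      max 0 (-p i - a₃) * (n : ℝ) + c' i with hy
  refine ⟨?_, ?_, ?_⟩ <;>
  · show _ = max (max x y) _
    have h := fun a => key_max x y (p i) a
    simp only [phiKP]
    push_cast
    first
    | rw [show p i * (σ:ℝ) + max 0 (p i - a₁) * ((l:ℝ)+1) + max 0 (p i - a₂) * (m:ℝ) +
            max 0 (p i - a₃) * (n:ℝ) + c i = x + max 0 (p i - a₁) by rw [hx]; ring,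
          show -p i * (σ:ℝ) + max 0 (-p i - a₁) * ((l:ℝ)+1) + max 0 (-p i - a₂) * (m:ℝ) +
            max 0 (-p i - a₃) * (n:ℝ) + c' i = y + max 0 (-p i - a₁) by rw [hy]; ring,
          h a₁]
    | rw [show p i * (σ:ℝ) + max 0 (p i - a₁) * (l:ℝ) + max 0 (p i - a₂) * ((m:ℝ)+1) +
            max 0 (p i - a₃) * (n:ℝ) + c i = x + max 0 (p i - a₂) by rw [hx]; ring,
          show -p i * (σ:ℝ) + max 0 (-p i - a₁) * (l:ℝ) + max 0 (-p i - a₂) * ((m:ℝ)+1) +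
            max 0 (-p i - a₃) * (n:ℝ) + c' i = y + max 0 (-p i - a₂) by rw [hy]; ring,
          h a₂]
    | rw [show p i * (σ:ℝ) + max 0 (p i - a₁) * (l:ℝ) + max 0 (p i - a₂) * (m:ℝ) +
            max 0 (p i - a₃) * ((n:ℝ)+1) + c i = x + max 0 (p i - a₃) by rw [hx]; ring,
          show -p i * (σ:ℝ) + max 0 (-p i - a₁) * (l:ℝ) + max 0 (-p i - a₂) * (m:ℝ) +
            max 0 (-p i - a₃) * ((n:ℝ)+1) + c' i = y + max 0 (-p i - a₃) by rw [hy]; ring,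
          h a₃]
    congr 2 <;> rw [hx, hy] <;> ring
end

section
/- (Lemma 3-2) In the uKP setting, for all integers l, m, n: τ(l+1, m, n) = max over k_1 ∈ {0,1,…,N} of ( τ_c(N−k_1, N+1) − k_1 a_1 ), where τ_c is formed from the columns φ(l,m,n,s+j). -/
lemma max_zero_sub (x a : ℝ) : max 0 (x - a) = max a x - a := by
  rcases le_total a x with h | h
  · rw [max_eq_right (by linarith : (0:ℝ) ≤ x - a), max_eq_right h]
  · rw [max_eq_left (by linarith : x - a ≤ (0:ℝ)), max_eq_left h]; ring

lemma key_step (A B P a : ℝ) :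
    max (A + max 0 (P - a)) (B + max 0 (-P - a)) =
      max (max (A + P) (B - P) - a) (max A B) := by
  rw [max_zero_sub P a, max_zero_sub (-P) a]
  have h1 : A + (max a P - a) = max A (A + P - a) := by
    rcases le_total a P with h | h
    · rw [max_eq_right h, max_eq_right (by linarith : A ≤ A + P - a)]; ring
    · rw [max_eq_left h, max_eq_left (by linarith : A + P - a ≤ A)]; ring
  have h2 : B + (max a (-P) - a) = max B (B - P - a) := by
    rcases le_total a (-P) with h | h
    · rw [max_eq_right h, max_eq_right (by linarith : B ≤ B - P - a)]; ring
    · rw [max_eq_left h, max_eq_left (by linarith : B - P - a ≤ B)]; ring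
  have h3 : max (A + P) (B - P) - a = max (A + P - a) (B - P - a) := by
    rcases le_total (A + P) (B - P) with h | h
    · rw [max_eq_right h, max_eq_right (by linarith : A + P - a ≤ B - P - a)]
    · rw [max_eq_left h, max_eq_left (by linarith : B - P - a ≤ A + P - a)]
  rw [h1, h2, h3, max_max_max_comm, max_comm (max (A + P - a) (B - P - a)) (max A B)]

lemma phi_step {N : ℕ} (a₁ a₂ a₃ : ℝ) (p c c' : Fin N → ℝ) (i : Fin N) (l m n σ : ℤ) :
    phiKP a₁ a₂ a₃ p c c' i (l + 1) m n σ =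
      max (phiKP a₁ a₂ a₃ p c c' i l m n (σ + 1) - a₁)
        (phiKP a₁ a₂ a₃ p c c' i l m n σ) := by
  set A : ℝ := p i * (σ : ℝ) + max 0 (p i - a₁) * (l : ℝ) + max 0 (p i - a₂) * (m : ℝ) +
      max 0 (p i - a₃) * (n : ℝ) + c i with hA
  set B : ℝ := -p i * (σ : ℝ) + max 0 (-p i - a₁) * (l : ℝ) + max 0 (-p i - a₂) * (m : ℝ) +
      max 0 (-p i - a₃) * (n : ℝ) + c' i with hB
  have L : phiKP a₁ a₂ a₃ p c c' i (l + 1) m n σ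
      = max (A + max 0 (p i - a₁)) (B + max 0 (-p i - a₁)) := by
    simp only [phiKP]; push_cast; congr 1 <;> (simp only [hA, hB]; ring)
  have R1 : phiKP a₁ a₂ a₃ p c c' i l m n (σ + 1) = max (A + p i) (B - p i) := by
    simp only [phiKP]; push_cast; congr 1 <;> (simp only [hA, hB]; ring)
  have R2 : phiKP a₁ a₂ a₃ p c c' i l m n σ = max A B := rfl
  rw [L, R1, R2, key_step]

lemma cvx_gen (u v w u' v' w' : ℝ) (h : u + w = 2 * v) (h' : u' + w' = 2 * v') :
    2 * max v v' ≤ max u u' + max w w' := by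
  rcases le_total v v' with hv | hv <;>
    [rw [max_eq_right hv]; rw [max_eq_left hv]] <;>
    nlinarith [le_max_left u u', le_max_right u u', le_max_left w w', le_max_right w w']

lemma phi_cvx {N : ℕ} (a₁ a₂ a₃ : ℝ) (p c c' : Fin N → ℝ) (i : Fin N) (l m n σ : ℤ) :
    2 * phiKP a₁ a₂ a₃ p c c' i l m n σ ≤
      phiKP a₁ a₂ a₃ p c c' i l m n (σ - 1) + phiKP a₁ a₂ a₃ p c c' i l m n (σ + 1) := by
  simp only [phiKP]
  apply cvx_gen <;> push_cast <;> ring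

lemma le_uperm {N : ℕ} (A : Matrix (Fin N) (Fin N) ℝ) (π : Equiv.Perm (Fin N)) :
    ∑ i, A i (π i) ≤ uperm A := by
  unfold uperm
  exact Finset.le_sup' (fun π : Equiv.Perm (Fin N) => ∑ i, A i (π i)) (Finset.mem_univ π)

lemma uperm_le {N : ℕ} (A : Matrix (Fin N) (Fin N) ℝ) (x : ℝ)
    (h : ∀ π : Equiv.Perm (Fin N), ∑ i, A i (π i) ≤ x) : uperm A ≤ x := by
  unfold uperm
  exact Finset.sup'_le _ _ fun π _ => h π

lemma sum_split_pair {β : Type*} [AddCommMonoid β] {N : ℕ} (x y : Fin N) (hxy : x ≠ y)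
    (f : Fin N → β) :
    ∑ i, f i = f x + f y + ∑ i ∈ (Finset.univ.erase x).erase y, f i := by
  rw [← Finset.add_sum_erase _ f (Finset.mem_univ x),
    ← Finset.add_sum_erase _ f (Finset.mem_erase.mpr ⟨hxy.symm, Finset.mem_univ y⟩),
    ← add_assoc]

lemma sum_indicator (N k₁ : ℕ) (h : k₁ ≤ N) (a : ℝ) :
    ∑ j ∈ Finset.range N, (if N ≤ j + k₁ then a else 0) = (k₁ : ℝ) * a := by
  rw [Finset.range_eq_Ico,
    ← Finset.sum_Ico_consecutive _ (Nat.zero_le (N - k₁)) (Nat.sub_le N k₁)]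
  have h1 : ∑ j ∈ Finset.Ico 0 (N - k₁), (if N ≤ j + k₁ then a else 0) = 0 :=
    Finset.sum_eq_zero fun j hj => by
      rw [Finset.mem_Ico] at hj; rw [if_neg (by omega)]
  have h2 : ∑ j ∈ Finset.Ico (N - k₁) N, (if N ≤ j + k₁ then a else 0)
      = ∑ _j ∈ Finset.Ico (N - k₁) N, a :=
    Finset.sum_congr rfl fun j hj => by
      rw [Finset.mem_Ico] at hj; rw [if_pos (by omega)]
  rw [h1, h2, Finset.sum_const, Nat.card_Ico, zero_add]
  have h3 : N - (N - k₁) = k₁ := by omega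
  rw [h3, nsmul_eq_mul]

lemma sorted_case (N : ℕ) (a₁ : ℝ) (G : ℤ → Fin N → ℝ)
    (π : Equiv.Perm (Fin N)) (ε : Fin N → Bool)
    (hs : ∀ (j : Fin N) (h : (j : ℕ) + 1 < N), ε j = true → ε ⟨j.1 + 1, h⟩ = true) :
    (∑ i : Fin N, if ε (π i) then G (((π i).1 : ℤ) + 1) i - a₁ else G ((π i).1 : ℤ) i)
      ≤ (Finset.range (N + 1)).sup' Finset.nonempty_range_add_one
          (fun k₁ => uperm (Matrix.of fun i j : Fin N =>
              G (if (j.1 : ℤ) < (N : ℤ) - (k₁ : ℤ) then (j.1 : ℤ) else (j.1 : ℤ) + 1) i)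
            - (k₁ : ℝ) * a₁) := by
  classical
  -- monotonicity of ε
  have step : ∀ (d j : ℕ) (hj : j < N) (hjd : j + d < N),
      ε ⟨j, hj⟩ = true → ε ⟨j + d, hjd⟩ = true := by
    intro d
    induction d with
    | zero => intro j hj hjd h; exact h
    | succ d ih =>
      intro j hj hjd h
      have h1 : j + d < N := by omega
      exact hs ⟨j + d, h1⟩ (by show j + d + 1 < N; omega) (ih j hj h1 h)
  have hmono : ∀ j j' : Fin N, j ≤ j' → ε j = true → ε j' = true := by
    intro j j' hle h
    have hle' : j.1 ≤ j'.1 := hle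
    have hj' : j' = ⟨j.1 + (j'.1 - j.1), by omega⟩ := by
      apply Fin.ext; simp; omega
    rw [hj']
    exact step (j'.1 - j.1) j.1 j.isLt (by omega) h
  set k₁ : ℕ := (Finset.univ.filter fun j => ε j = true).card with hk₁def
  have hk₁ : k₁ ≤ N := le_trans (Finset.card_filter_le _ _) (by simp)
  have hchar : ∀ j : Fin N, ε j = true ↔ N ≤ j.1 + k₁ := by
    intro j
    constructor
    · intro h
      have hsub : Finset.Ici j ⊆ Finset.univ.filter (fun j => ε j = true) := fun j' hj' =>
        Finset.mem_filter.mpr ⟨Finset.mem_univ _, hmono j j' (Finset.mem_Ici.mp hj') h⟩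
      have hc := Finset.card_le_card hsub
      rw [Fin.card_Ici] at hc
      have := j.isLt
      omega
    · intro h
      by_contra hc
      have hf : ε j = false := by simpa using hc
      have hsub : Finset.univ.filter (fun j => ε j = true) ⊆ Finset.Ioi j := by
        intro j' hj'
        rw [Finset.mem_filter] at hj'
        rw [Finset.mem_Ioi]
        by_contra hc2
        push_neg at hc2
        have := hmono j' j hc2 hj'.2
        rw [hf] at this
        exact absurd this (by simp)
      have hcard := Finset.card_le_card hsub
      rw [Fin.card_Ioi] at hcard
      have := j.isLt
      omega
  have hterm : ∀ i : Fin N,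
      (if ε (π i) then G (((π i).1 : ℤ) + 1) i - a₁ else G ((π i).1 : ℤ) i)
      = G (if ((π i).1 : ℤ) < (N : ℤ) - (k₁ : ℤ) then ((π i).1 : ℤ) else ((π i).1 : ℤ) + 1) i
        - (if ε (π i) then a₁ else 0) := by
    intro i
    cases hi : ε (π i) with
    | true =>
      have hge : N ≤ (π i).1 + k₁ := (hchar _).mp hi
      have hcond : ¬ (((π i).1 : ℤ) < (N : ℤ) - (k₁ : ℤ)) := by push_cast; omega
      rw [if_neg hcond, if_pos rfl, if_pos rfl]
    | false =>
      have hlt : ¬ N ≤ (π i).1 + k₁ := fun hh => by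
        rw [(hchar _).mpr hh] at hi; cases hi
      have hcond : (((π i).1 : ℤ) < (N : ℤ) - (k₁ : ℤ)) := by push_cast; omega
      rw [if_pos hcond, if_neg (show ¬(false = true) by simp),
        if_neg (show ¬(false = true) by simp), sub_zero]
  rw [Finset.sum_congr rfl fun i _ => hterm i, Finset.sum_sub_distrib]
  have hind : ∑ i : Fin N, (if ε (π i) then a₁ else 0) = (k₁ : ℝ) * a₁ := by
    calc ∑ i : Fin N, (if ε (π i) then a₁ else 0)
        = ∑ i : Fin N, (if N ≤ (π i).1 + k₁ then a₁ else 0) :=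
          Finset.sum_congr rfl fun i _ => if_congr (hchar (π i)) rfl rfl
      _ = ∑ j : Fin N, (if N ≤ j.1 + k₁ then a₁ else 0) :=
          Equiv.sum_comp π (fun j : Fin N => if N ≤ j.1 + k₁ then a₁ else 0)
      _ = ∑ j ∈ Finset.range N, (if N ≤ j + k₁ then a₁ else 0) :=
          Fin.sum_univ_eq_sum_range (fun v => if N ≤ v + k₁ then a₁ else 0) N
      _ = (k₁ : ℝ) * a₁ := sum_indicator N k₁ hk₁ a₁
  rw [hind]
  have hle1 : (∑ i : Fin N,
      G (if ((π i).1 : ℤ) < (N : ℤ) - (k₁ : ℤ) then ((π i).1 : ℤ) else ((π i).1 : ℤ) + 1) i)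
      ≤ uperm (Matrix.of fun i j : Fin N =>
          G (if (j.1 : ℤ) < (N : ℤ) - (k₁ : ℤ) then (j.1 : ℤ) else (j.1 : ℤ) + 1) i) :=
    le_uperm (Matrix.of fun i j : Fin N =>
      G (if (j.1 : ℤ) < (N : ℤ) - (k₁ : ℤ) then (j.1 : ℤ) else (j.1 : ℤ) + 1) i) π
  have hmem : k₁ ∈ Finset.range (N + 1) := Finset.mem_range.mpr (by omega)
  calc (∑ i : Fin N,
      G (if ((π i).1 : ℤ) < (N : ℤ) - (k₁ : ℤ) then ((π i).1 : ℤ) else ((π i).1 : ℤ) + 1) i)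
      - (k₁ : ℝ) * a₁
      ≤ uperm (Matrix.of fun i j : Fin N =>
          G (if (j.1 : ℤ) < (N : ℤ) - (k₁ : ℤ) then (j.1 : ℤ) else (j.1 : ℤ) + 1) i)
        - (k₁ : ℝ) * a₁ := by linarith
    _ ≤ _ := Finset.le_sup' (fun k₁ : ℕ => uperm (Matrix.of fun i j : Fin N =>
          G (if (j.1 : ℤ) < (N : ℤ) - (k₁ : ℤ) then (j.1 : ℤ) else (j.1 : ℤ) + 1) i)
        - (k₁ : ℝ) * a₁) hmem

lemma main_aux (N : ℕ) (a₁ : ℝ) (G : ℤ → Fin N → ℝ)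
    (hcvx : ∀ (σ : ℤ) (i j : Fin N),
      G σ i + G σ j ≤ max (G (σ-1) i + G (σ+1) j) (G (σ-1) j + G (σ+1) i))
    (M : ℕ) :
    ∀ (π : Equiv.Perm (Fin N)) (ε : Fin N → Bool),
      (∑ j : Fin N, if ε j then (N - 1 - j.1) else 0) ≤ M →
      (∑ i : Fin N, if ε (π i) then G (((π i).1 : ℤ) + 1) i - a₁ else G (((π i).1 : ℤ)) i)
        ≤ (Finset.range (N + 1)).sup' Finset.nonempty_range_add_one
            (fun k₁ => uperm (Matrix.of fun i j : Fin N =>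
                G (if (j.1 : ℤ) < (N : ℤ) - (k₁ : ℤ) then (j.1 : ℤ) else (j.1 : ℤ) + 1) i)
              - (k₁ : ℝ) * a₁) := by
  induction M with
  | zero =>
    intro π ε hM
    apply sorted_case N a₁ G π ε
    intro j hj hεj
    exfalso
    have hpos : 1 ≤ (if ε j then (N - 1 - j.1) else 0) := by
      rw [if_pos hεj]; omega
    have hle := Finset.single_le_sum
      (f := fun j : Fin N => if ε j then (N - 1 - j.1) else 0)
      (fun _ _ => Nat.zero_le _) (Finset.mem_univ j)
    beta_reduce at hle
    omega
  | succ M ih =>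
    intro π ε hM
    by_cases hinv : ∃ j : Fin N, ∃ h : (j : ℕ) + 1 < N, ε j = true ∧ ε ⟨j.1 + 1, h⟩ = false
    · obtain ⟨jf, hj1, hT, hF⟩ := hinv
      set jg : Fin N := ⟨jf.1 + 1, hj1⟩ with hjg
      have hval : (jg.1 : ℕ) = jf.1 + 1 := rfl
      have hfg : jf ≠ jg := by
        intro h
        have := congrArg Fin.val h
        omega
      set a := π.symm jf with ha
      set b := π.symm jg with hb
      have hab : a ≠ b := fun h => hfg (π.symm.injective h)
      have hπa : π a = jf := Equiv.apply_symm_apply π jf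
      have hπb : π b = jg := Equiv.apply_symm_apply π jg
      set ε' : Fin N → Bool := Function.update (Function.update ε jf false) jg true with hε'
      have hε'g : ε' jg = true := by rw [hε', Function.update_self]
      have hε'f : ε' jf = false := by
        rw [hε', Function.update_of_ne hfg, Function.update_self]
      have hε'o : ∀ j, j ≠ jf → j ≠ jg → ε' j = ε j := by
        intro j h1 h2
        rw [hε', Function.update_of_ne h2, Function.update_of_ne h1]
      -- measure decreases
      have hM' : (∑ j : Fin N, if ε' j then (N - 1 - j.1) else 0) ≤ M := by
        have hsplit := sum_split_pair jf jg hfg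
          (fun j : Fin N => if ε j then (N - 1 - j.1) else 0)
        have hsplit' := sum_split_pair jf jg hfg
          (fun j : Fin N => if ε' j then (N - 1 - j.1) else 0)
        have hrest : ∑ j ∈ (Finset.univ.erase jf).erase jg, (if ε' j then (N - 1 - j.1) else 0)
            = ∑ j ∈ (Finset.univ.erase jf).erase jg, (if ε j then (N - 1 - j.1) else 0) := by
          apply Finset.sum_congr rfl
          intro j hj
          rw [Finset.mem_erase] at hj
          obtain ⟨h2, h1⟩ := hj
          rw [Finset.mem_erase] at h1
          rw [hε'o j h1.1 h2]
        have e1 : (if ε jf then (N - 1 - jf.1) else 0) = N - 1 - jf.1 := if_pos hT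
        have e2 : (if ε jg then (N - 1 - jg.1) else 0) = 0 := by simp [hF]
        have e3 : (if ε' jf then (N - 1 - jf.1) else 0) = 0 := by simp [hε'f]
        have e4 : (if ε' jg then (N - 1 - jg.1) else 0) = N - 1 - jg.1 := if_pos hε'g
        rw [e1, e2] at hsplit
        rw [e3, e4, hrest] at hsplit'
        omega
      set π' : Equiv.Perm (Fin N) := π.trans (Equiv.swap jf jg) with hπ'
      have hπ'a : π' a = jg := by
        rw [hπ']
        simp only [Equiv.trans_apply, hπa]
        exact Equiv.swap_apply_left jf jg
      have hπ'b : π' b = jf := by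
        rw [hπ']
        simp only [Equiv.trans_apply, hπb]
        exact Equiv.swap_apply_right jf jg
      have hπ'o : ∀ i, i ≠ a → i ≠ b → π' i = π i := by
        intro i h1 h2
        rw [hπ']
        simp only [Equiv.trans_apply]
        apply Equiv.swap_apply_of_ne_of_ne
        · exact fun h => h1 (π.injective (h.trans hπa.symm))
        · exact fun h => h2 (π.injective (h.trans hπb.symm))
      -- splits
      have hs1 := sum_split_pair a b hab
        (fun i : Fin N => if ε (π i) then G (((π i).1 : ℤ) + 1) i - a₁ else G (((π i).1 : ℤ)) i)
      have hs2 := sum_split_pair a b hab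
        (fun i : Fin N => if ε' (π i) then G (((π i).1 : ℤ) + 1) i - a₁ else G (((π i).1 : ℤ)) i)
      have hs3 := sum_split_pair a b hab
        (fun i : Fin N => if ε' (π' i) then G (((π' i).1 : ℤ) + 1) i - a₁ else G (((π' i).1 : ℤ)) i)
      have hrest2 : ∑ i ∈ (Finset.univ.erase a).erase b,
            (if ε' (π i) then G (((π i).1 : ℤ) + 1) i - a₁ else G (((π i).1 : ℤ)) i)
          = ∑ i ∈ (Finset.univ.erase a).erase b,
            (if ε (π i) then G (((π i).1 : ℤ) + 1) i - a₁ else G (((π i).1 : ℤ)) i) := by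
        apply Finset.sum_congr rfl
        intro i hi
        rw [Finset.mem_erase] at hi
        obtain ⟨h2, h1⟩ := hi
        rw [Finset.mem_erase] at h1
        have hne1 : π i ≠ jf := fun h => h1.1 (π.injective (h.trans hπa.symm))
        have hne2 : π i ≠ jg := fun h => h2 (π.injective (h.trans hπb.symm))
        rw [hε'o (π i) hne1 hne2]
      have hrest3 : ∑ i ∈ (Finset.univ.erase a).erase b,
            (if ε' (π' i) then G (((π' i).1 : ℤ) + 1) i - a₁ else G (((π' i).1 : ℤ)) i)
          = ∑ i ∈ (Finset.univ.erase a).erase b,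
            (if ε (π i) then G (((π i).1 : ℤ) + 1) i - a₁ else G (((π i).1 : ℤ)) i) := by
        apply Finset.sum_congr rfl
        intro i hi
        rw [Finset.mem_erase] at hi
        obtain ⟨h2, h1⟩ := hi
        rw [Finset.mem_erase] at h1
        rw [hπ'o i h1.1 h2]
        have hne1 : π i ≠ jf := fun h => h1.1 (π.injective (h.trans hπa.symm))
        have hne2 : π i ≠ jg := fun h => h2 (π.injective (h.trans hπb.symm))
        rw [hε'o (π i) hne1 hne2]
      rw [hrest2] at hs2
      rw [hrest3] at hs3
      -- values of the four special terms
      have hgcast : ((jg.1 : ℕ) : ℤ) = (jf.1 : ℤ) + 1 := by rw [hval]; push_cast; ring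
      have hv1a : (if ε (π a) then G (((π a).1 : ℤ) + 1) a - a₁ else G (((π a).1 : ℤ)) a)
          = G ((jf.1 : ℤ) + 1) a - a₁ := by rw [hπa, if_pos hT]
      have hv1b : (if ε (π b) then G (((π b).1 : ℤ) + 1) b - a₁ else G (((π b).1 : ℤ)) b)
          = G ((jf.1 : ℤ) + 1) b := by
        rw [hπb, if_neg (by rw [hF]; simp), hgcast]
      have hv2a : (if ε' (π a) then G (((π a).1 : ℤ) + 1) a - a₁ else G (((π a).1 : ℤ)) a)
          = G ((jf.1 : ℤ)) a := by rw [hπa, if_neg (by rw [hε'f]; simp)]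
      have hv2b : (if ε' (π b) then G (((π b).1 : ℤ) + 1) b - a₁ else G (((π b).1 : ℤ)) b)
          = G ((jf.1 : ℤ) + 2) b - a₁ := by
        rw [hπb, if_pos hε'g, hgcast]; ring_nf
      have hv3a : (if ε' (π' a) then G (((π' a).1 : ℤ) + 1) a - a₁ else G (((π' a).1 : ℤ)) a)
          = G ((jf.1 : ℤ) + 2) a - a₁ := by
        rw [hπ'a, if_pos hε'g, hgcast]; ring_nf
      have hv3b : (if ε' (π' b) then G (((π' b).1 : ℤ) + 1) b - a₁ else G (((π' b).1 : ℤ)) b)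
          = G ((jf.1 : ℤ)) b := by rw [hπ'b, if_neg (by rw [hε'f]; simp)]
      rw [hv1a, hv1b] at hs1
      rw [hv2a, hv2b] at hs2
      rw [hv3a, hv3b] at hs3
      -- convexity exchange
      have hkey := hcvx ((jf.1 : ℤ) + 1) a b
      rw [show ((jf.1 : ℤ) + 1) - 1 = (jf.1 : ℤ) by ring,
        show ((jf.1 : ℤ) + 1) + 1 = (jf.1 : ℤ) + 2 by ring] at hkey
      have h2 := ih π ε' hM'
      have h3 := ih π' ε' hM'
      rw [hs2] at h2
      rw [hs3] at h3
      rw [hs1]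
      rcases max_cases (G ((jf.1 : ℤ)) a + G ((jf.1 : ℤ) + 2) b)
          (G ((jf.1 : ℤ)) b + G ((jf.1 : ℤ) + 2) a) with ⟨hm, _⟩ | ⟨hm, _⟩ <;>
        rw [hm] at hkey <;> linarith
    · -- sorted
      apply sorted_case N a₁ G π ε
      intro j hj hεj
      by_contra hc
      exact hinv ⟨j, hj, hεj, by simpa using hc⟩


lemma tauc_eq {N : ℕ} (a₁ a₂ a₃ : ℝ) (p c c' : Fin N → ℝ) (s l m n : ℤ)
    (k₁ : ℕ) (hk : k₁ ≤ N) :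
    taucKP a₁ a₂ a₃ p c c' s l m n ((N : ℤ) - k₁) ((N : ℤ) + 1)
      = uperm (Matrix.of fun i j : Fin N =>
          phiKP a₁ a₂ a₃ p c c' i l m n
            (s + (if (j.1 : ℤ) < (N : ℤ) - (k₁ : ℤ) then (j.1 : ℤ) else (j.1 : ℤ) + 1))) := by
  unfold taucKP
  congr 1
  have hmin : min ((N : ℤ) - (k₁ : ℤ)) ((N : ℤ) + 1) = (N : ℤ) - (k₁ : ℤ) := by
    apply min_eq_left; omega
  have hmax : max ((N : ℤ) - (k₁ : ℤ)) ((N : ℤ) + 1) = (N : ℤ) + 1 := by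
    apply max_eq_right; omega
  funext i j
  simp only [Matrix.of_apply]
  congr 1
  rw [hmin, hmax]
  unfold omitTwo
  have hj : (j.1 : ℤ) < (N : ℤ) := by exact_mod_cast j.isLt
  split_ifs <;> omega

/-- Lemma 3-2: `τ(l+1, m, n) = max_{0 ≤ k₁ ≤ N} ( τ_c(N - k₁, N + 1) - k₁ a₁ )`. -/
theorem lemma3_2 (N : ℕ) (hN : 1 ≤ N) (a₁ a₂ a₃ : ℝ) (h₁₂ : a₂ < a₁) (h₂₃ : a₃ < a₂)
    (p c c' : Fin N → ℝ) (s l m n : ℤ) :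
    tauKP a₁ a₂ a₃ p c c' s (l + 1) m n =
      (Finset.range (N + 1)).sup' ⟨0, Finset.mem_range.mpr (Nat.succ_pos N)⟩
        (fun k₁ => taucKP a₁ a₂ a₃ p c c' s l m n ((N : ℤ) - k₁) ((N : ℤ) + 1) -
          (k₁ : ℝ) * a₁) := by
  classical
  set G : ℤ → Fin N → ℝ := fun σ i => phiKP a₁ a₂ a₃ p c c' i l m n (s + σ) with hG
  have hcvx : ∀ (σ : ℤ) (i j : Fin N),
      G σ i + G σ j ≤ max (G (σ - 1) i + G (σ + 1) j) (G (σ - 1) j + G (σ + 1) i) := by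
    intro σ i j
    have hi := phi_cvx a₁ a₂ a₃ p c c' i l m n (s + σ)
    have hj := phi_cvx a₁ a₂ a₃ p c c' j l m n (s + σ)
    have e1 : s + σ - 1 = s + (σ - 1) := by ring
    have e2 : s + σ + 1 = s + (σ + 1) := by ring
    rw [e1, e2] at hi hj
    simp only [hG]
    rcases le_total
      (phiKP a₁ a₂ a₃ p c c' i l m n (s + (σ - 1)) + phiKP a₁ a₂ a₃ p c c' j l m n (s + (σ + 1)))
      (phiKP a₁ a₂ a₃ p c c' j l m n (s + (σ - 1)) + phiKP a₁ a₂ a₃ p c c' i l m n (s + (σ + 1)))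
      with h | h
    · rw [max_eq_right h]; linarith
    · rw [max_eq_left h]; linarith
  have hL : tauKP a₁ a₂ a₃ p c c' s (l + 1) m n
      = Finset.univ.sup' ⟨1, Finset.mem_univ 1⟩ (fun π : Equiv.Perm (Fin N) =>
          ∑ i, phiKP a₁ a₂ a₃ p c c' i (l + 1) m n (s + ((π i).1 : ℤ))) := rfl
  apply le_antisymm
  · rw [hL]
    apply Finset.sup'_le
    intro π _
    have hentry : ∀ i : Fin N, phiKP a₁ a₂ a₃ p c c' i (l + 1) m n (s + ((π i).1 : ℤ))
        = max (G (((π i).1 : ℤ) + 1) i - a₁) (G (((π i).1 : ℤ)) i) := by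
      intro i
      have h := phi_step a₁ a₂ a₃ p c c' i l m n (s + ((π i).1 : ℤ))
      rw [show (s + ((π i).1 : ℤ) + 1) = s + (((π i).1 : ℤ) + 1) by ring] at h
      exact h
    rw [Finset.sum_congr rfl (fun i _ => hentry i)]
    set ε : Fin N → Bool :=
      fun j => decide (G ((j.1 : ℤ)) (π.symm j) ≤ G ((j.1 : ℤ) + 1) (π.symm j) - a₁) with hε
    have hmax : ∀ i : Fin N, max (G (((π i).1 : ℤ) + 1) i - a₁) (G (((π i).1 : ℤ)) i)
        = (if ε (π i) then G (((π i).1 : ℤ) + 1) i - a₁ else G (((π i).1 : ℤ)) i) := by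
      intro i
      simp only [hε, Equiv.symm_apply_apply, decide_eq_true_eq]
      split_ifs with h
      · exact max_eq_left h
      · exact max_eq_right (le_of_not_ge h)
    rw [Finset.sum_congr rfl (fun i _ => hmax i)]
    refine le_trans
      (main_aux N a₁ G hcvx (∑ j : Fin N, if ε j then (N - 1 - j.1) else 0) π ε le_rfl) ?_
    apply Finset.sup'_le
    intro k₁ hk₁
    have hk : k₁ ≤ N := by
      rw [Finset.mem_range] at hk₁; omega
    refine le_trans (le_of_eq ?_) (Finset.le_sup'
      (fun k₁ : ℕ => taucKP a₁ a₂ a₃ p c c' s l m n ((N : ℤ) - k₁) ((N : ℤ) + 1) -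
        (k₁ : ℝ) * a₁) hk₁)
    rw [tauc_eq a₁ a₂ a₃ p c c' s l m n k₁ hk]
  · apply Finset.sup'_le
    intro k₁ hk₁
    have hk : k₁ ≤ N := by
      rw [Finset.mem_range] at hk₁; omega
    rw [tauc_eq a₁ a₂ a₃ p c c' s l m n k₁ hk, sub_le_iff_le_add]
    apply uperm_le
    intro π
    simp only [Matrix.of_apply]
    have hstep : ∀ i : Fin N,
        phiKP a₁ a₂ a₃ p c c' i l m n
          (s + (if ((π i).1 : ℤ) < (N : ℤ) - (k₁ : ℤ) then ((π i).1 : ℤ) else ((π i).1 : ℤ) + 1))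
        ≤ phiKP a₁ a₂ a₃ p c c' i (l + 1) m n (s + ((π i).1 : ℤ))
          + (if N ≤ (π i).1 + k₁ then a₁ else 0) := by
      intro i
      rw [phi_step a₁ a₂ a₃ p c c' i l m n (s + ((π i).1 : ℤ))]
      by_cases h : ((π i).1 : ℤ) < (N : ℤ) - (k₁ : ℤ)
      · rw [if_pos h, if_neg (by push_cast at h ⊢; omega), add_zero]
        exact le_max_right _ _
      · rw [if_neg h, if_pos (by push_cast at h ⊢; omega)]
        have hle := le_max_left
          (phiKP a₁ a₂ a₃ p c c' i l m n (s + ((π i).1 : ℤ) + 1) - a₁)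
          (phiKP a₁ a₂ a₃ p c c' i l m n (s + ((π i).1 : ℤ)))
        rw [show s + (((π i).1 : ℤ) + 1) = s + ((π i).1 : ℤ) + 1 by ring]
        linarith
    have h1 : (∑ i, phiKP a₁ a₂ a₃ p c c' i (l + 1) m n (s + ((π i).1 : ℤ)))
        ≤ tauKP a₁ a₂ a₃ p c c' s (l + 1) m n :=
      le_uperm (Matrix.of fun i j : Fin N =>
        phiKP a₁ a₂ a₃ p c c' i (l + 1) m n (s + (j.1 : ℤ))) π
    have h2 : (∑ i : Fin N, (if N ≤ (π i).1 + k₁ then a₁ else 0)) = (k₁ : ℝ) * a₁ := by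
      calc (∑ i : Fin N, (if N ≤ (π i).1 + k₁ then a₁ else 0))
          = ∑ j : Fin N, (if N ≤ j.1 + k₁ then a₁ else 0) :=
            Equiv.sum_comp π (fun j : Fin N => if N ≤ j.1 + k₁ then a₁ else 0)
        _ = ∑ j ∈ Finset.range N, (if N ≤ j + k₁ then a₁ else 0) :=
            Fin.sum_univ_eq_sum_range (fun v => if N ≤ v + k₁ then a₁ else 0) N
        _ = (k₁ : ℝ) * a₁ := sum_indicator N k₁ hk a₁
    calc (∑ i : Fin N, phiKP a₁ a₂ a₃ p c c' i l m n
          (s + (if ((π i).1 : ℤ) < (N : ℤ) - (k₁ : ℤ) then ((π i).1 : ℤ) else ((π i).1 : ℤ) + 1)))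
        ≤ ∑ i : Fin N, (phiKP a₁ a₂ a₃ p c c' i (l + 1) m n (s + ((π i).1 : ℤ))
            + (if N ≤ (π i).1 + k₁ then a₁ else 0)) :=
          Finset.sum_le_sum (fun i _ => hstep i)
      _ = (∑ i, phiKP a₁ a₂ a₃ p c c' i (l + 1) m n (s + ((π i).1 : ℤ)))
          + ∑ i : Fin N, (if N ≤ (π i).1 + k₁ then a₁ else 0) := Finset.sum_add_distrib
      _ ≤ tauKP a₁ a₂ a₃ p c c' s (l + 1) m n + (k₁ : ℝ) * a₁ := by rw [h2]; linarith
end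

section
/- (Lemma 3-3, second part) In the uKP setting, define Ψ(k_2, k_3) for k_2, k_3 ∈ {0,1,…,N} by: if k_3 ≥ k_2 and k_3 ≥ N−k_2, then Ψ(k_2,k_3) = max over 0 ≤ i ≤ N−k_3 of τ_c(N−k_3−i, N−k_2+1+i); if N−k_2 ≥ k_3 ≥ k_2, then Ψ(k_2,k_3) = max over 0 ≤ i ≤ k_2 of τ_c(N−k_2−k_3+i, N+1−i); if k_2 ≥ k_3 ≥ N−k_2, then Ψ(k_2,k_3) = max over 0 ≤ i ≤ N−k_2 of τ_c(N−k_2−i, N−k_3+1+i); and if k_2 ≥ k_3 and N−k_2 ≥ k_3, then Ψ(k_2,k_3) = max over 0 ≤ i ≤ k_3 of τ_c(N−k_2−k_3+i, N+1−i). Then for all k_2, k_3 ∈ {1,…,N}: if k_2 > k_3, then Ψ(k_2−1, k_3) = max( Ψ(k_2, k_3−1), τ_c(N−k_3+1, N−k_2+1) ); if k_2 = k_3, then Ψ(k_2−1, k_3) = Ψ(k_2, k_3−1); and if k_2 < k_3, then max( Ψ(k_2−1, k_3), τ_c(N−k_2+1, N−k_3+1) ) = Ψ(k_2, k_3−1).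 -/
/-- `Ψ(k₂, k₃)` in the uKP setting, defined by the four cases of Lemma 3-3. -/
noncomputable def PsiKP {N : ℕ} (a₁ a₂ a₃ : ℝ) (p c c' : Fin N → ℝ)
    (s l m n : ℤ) (k₂ k₃ : ℕ) : ℝ :=
  if (k₂ : ℤ) ≤ (k₃ : ℤ) ∧ (N : ℤ) - (k₂ : ℤ) ≤ (k₃ : ℤ) then
    (Finset.range (N - k₃ + 1)).sup' Finset.nonempty_range_add_one
      (fun i => taucKP a₁ a₂ a₃ p c c' s l m n ((N : ℤ) - k₃ - i) ((N : ℤ) - k₂ + 1 + i))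
  else if (k₂ : ℤ) ≤ (k₃ : ℤ) ∧ (k₃ : ℤ) ≤ (N : ℤ) - (k₂ : ℤ) then
    (Finset.range (k₂ + 1)).sup' Finset.nonempty_range_add_one
      (fun i => taucKP a₁ a₂ a₃ p c c' s l m n ((N : ℤ) - k₂ - k₃ + i) ((N : ℤ) + 1 - i))
  else if (k₃ : ℤ) ≤ (k₂ : ℤ) ∧ (N : ℤ) - (k₂ : ℤ) ≤ (k₃ : ℤ) then
    (Finset.range (N - k₂ + 1)).sup' Finset.nonempty_range_add_one
      (fun i => taucKP a₁ a₂ a₃ p c c' s l m n ((N : ℤ) - k₂ - i) ((N : ℤ) - k₃ + 1 + i))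
  else
    (Finset.range (k₃ + 1)).sup' Finset.nonempty_range_add_one
      (fun i => taucKP a₁ a₂ a₃ p c c' s l m n ((N : ℤ) - k₂ - k₃ + i) ((N : ℤ) + 1 - i))

lemma taucKP_symm {N : ℕ} (a₁ a₂ a₃ : ℝ) (p c c' : Fin N → ℝ)
    (s l m n : ℤ) (α β : ℤ) :
    taucKP a₁ a₂ a₃ p c c' s l m n α β = taucKP a₁ a₂ a₃ p c c' s l m n β α := by
  unfold taucKP; rw [min_comm, max_comm]

lemma taucKP_congr {N : ℕ} (a₁ a₂ a₃ : ℝ) (p c c' : Fin N → ℝ)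
    (s l m n : ℤ) {α β α' β' : ℤ} (hα : α = α') (hβ : β = β') :
    taucKP a₁ a₂ a₃ p c c' s l m n α β = taucKP a₁ a₂ a₃ p c c' s l m n α' β' := by
  rw [hα, hβ]

lemma sup'_exchange {s t : Finset ℕ} (hs : s.Nonempty) (ht : t.Nonempty) (f g : ℕ → ℝ)
    (h1 : ∀ i ∈ s, ∃ j ∈ t, f i = g j) (h2 : ∀ j ∈ t, ∃ i ∈ s, g j = f i) :
    s.sup' hs f = t.sup' ht g := by
  apply le_antisymm
  · exact Finset.sup'_le _ _ fun i hi => by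
      obtain ⟨j, hj, e⟩ := h1 i hi; exact e ▸ Finset.le_sup' g hj
  · exact Finset.sup'_le _ _ fun j hj => by
      obtain ⟨i, hi, e⟩ := h2 j hj; exact e ▸ Finset.le_sup' f hi

lemma sup'_Icc_succ (L B : ℕ) (h : L ≤ B) (f : ℕ → ℝ) :
    (Finset.Icc L (B+1)).sup' (Finset.nonempty_Icc.mpr (by omega)) f
      = max ((Finset.Icc L B).sup' (Finset.nonempty_Icc.mpr h) f) (f (B+1)) := by
  apply le_antisymm
  · apply Finset.sup'_le
    intro i hi
    rw [Finset.mem_Icc] at hi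
    rcases Nat.lt_or_ge i (B+1) with h' | h'
    · exact le_max_of_le_left (Finset.le_sup' f (Finset.mem_Icc.mpr ⟨hi.1, by omega⟩))
    · exact le_max_of_le_right (by rw [show i = B+1 by omega])
  · apply max_le
    · exact Finset.sup'_le _ _ fun i hi => Finset.le_sup' f
        (Finset.mem_Icc.mpr (by rw [Finset.mem_Icc] at hi; omega))
    · exact Finset.le_sup' f (Finset.mem_Icc.mpr (by omega))

lemma psi_canon {N : ℕ} (a₁ a₂ a₃ : ℝ) (p c c' : Fin N → ℝ) (s l m n : ℤ)
    (k₂ k₃ : ℕ) (h₂ : k₂ ≤ N) (h₃ : k₃ ≤ N) :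
    PsiKP a₁ a₂ a₃ p c c' s l m n k₂ k₃ =
      (Finset.Icc (N - k₂ - k₃) (min (N - k₂) (N - k₃))).sup'
        (Finset.nonempty_Icc.mpr (by omega))
        (fun α => taucKP a₁ a₂ a₃ p c c' s l m n (α : ℤ)
          (2*(N:ℤ) + 1 - k₂ - k₃ - α)) := by
  by_cases hA : (k₂:ℤ) ≤ (k₃:ℤ) ∧ (N:ℤ) - (k₂:ℤ) ≤ (k₃:ℤ)
  · rw [PsiKP, if_pos hA]
    obtain ⟨hA1, hA2⟩ := hA
    apply sup'_exchange
    · intro i hi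
      rw [Finset.mem_range] at hi
      exact ⟨N - k₃ - i, Finset.mem_Icc.mpr ⟨by omega, by omega⟩,
        taucKP_congr _ _ _ _ _ _ _ _ _ _ (by omega) (by omega)⟩
    · intro j hj
      rw [Finset.mem_Icc] at hj
      exact ⟨N - k₃ - j, Finset.mem_range.mpr (by omega),
        taucKP_congr _ _ _ _ _ _ _ _ _ _ (by omega) (by omega)⟩
  · by_cases hB : (k₂:ℤ) ≤ (k₃:ℤ) ∧ (k₃:ℤ) ≤ (N:ℤ) - (k₂:ℤ)
    · rw [PsiKP, if_neg hA, if_pos hB]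
      obtain ⟨hB1, hB2⟩ := hB
      apply sup'_exchange
      · intro i hi
        rw [Finset.mem_range] at hi
        exact ⟨N - k₂ - k₃ + i, Finset.mem_Icc.mpr ⟨by omega, by omega⟩,
          taucKP_congr _ _ _ _ _ _ _ _ _ _ (by omega) (by omega)⟩
      · intro j hj
        rw [Finset.mem_Icc] at hj
        exact ⟨j - (N - k₂ - k₃), Finset.mem_range.mpr (by omega),
          taucKP_congr _ _ _ _ _ _ _ _ _ _ (by omega) (by omega)⟩
    · by_cases hC : (k₃:ℤ) ≤ (k₂:ℤ) ∧ (N:ℤ) - (k₂:ℤ) ≤ (k₃:ℤ)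
      · rw [PsiKP, if_neg hA, if_neg hB, if_pos hC]
        obtain ⟨hC1, hC2⟩ := hC
        apply sup'_exchange
        · intro i hi
          rw [Finset.mem_range] at hi
          exact ⟨N - k₂ - i, Finset.mem_Icc.mpr ⟨by omega, by omega⟩,
            taucKP_congr _ _ _ _ _ _ _ _ _ _ (by omega) (by omega)⟩
        · intro j hj
          rw [Finset.mem_Icc] at hj
          exact ⟨N - k₂ - j, Finset.mem_range.mpr (by omega),
            taucKP_congr _ _ _ _ _ _ _ _ _ _ (by omega) (by omega)⟩
      · rw [PsiKP, if_neg hA, if_neg hB, if_neg hC]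
        have hd1 : (k₃:ℤ) < (k₂:ℤ) := by
          by_contra h
          push_neg at h
          rcases le_total ((N:ℤ) - (k₂:ℤ)) (k₃:ℤ) with h' | h'
          · exact hA ⟨h, h'⟩
          · exact hB ⟨h, h'⟩
        have hd2 : (k₃:ℤ) < (N:ℤ) - (k₂:ℤ) := by
          by_contra h
          push_neg at h
          exact hC ⟨le_of_lt hd1, h⟩
        apply sup'_exchange
        · intro i hi
          rw [Finset.mem_range] at hi
          exact ⟨N - k₂ - k₃ + i, Finset.mem_Icc.mpr ⟨by omega, by omega⟩,
            taucKP_congr _ _ _ _ _ _ _ _ _ _ (by omega) (by omega)⟩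
        · intro j hj
          rw [Finset.mem_Icc] at hj
          exact ⟨j - (N - k₂ - k₃), Finset.mem_range.mpr (by omega),
            taucKP_congr _ _ _ _ _ _ _ _ _ _ (by omega) (by omega)⟩

lemma sup'_congr_set (s t : Finset ℕ) (hs : s.Nonempty) (ht : t.Nonempty)
    (h : s = t) (f : ℕ → ℝ) : s.sup' hs f = t.sup' ht f := by
  subst h; rfl

/-- Lemma 3-3, second part: the recurrences (KP Psi2) satisfied by `Ψ` for
`1 ≤ k₂, k₃ ≤ N`. -/
theorem lemma3_3_second (N : ℕ) (hN : 1 ≤ N) (a₁ a₂ a₃ : ℝ) (h₁₂ : a₂ < a₁) (h₂₃ : a₃ < a₂)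
    (p c c' : Fin N → ℝ) (s l m n : ℤ)
    (k₂ k₃ : ℕ) (hk₂ : 1 ≤ k₂) (hk₂' : k₂ ≤ N) (hk₃ : 1 ≤ k₃) (hk₃' : k₃ ≤ N) :
    (k₃ < k₂ →
      PsiKP a₁ a₂ a₃ p c c' s l m n (k₂ - 1) k₃ =
        max (PsiKP a₁ a₂ a₃ p c c' s l m n k₂ (k₃ - 1))
          (taucKP a₁ a₂ a₃ p c c' s l m n ((N : ℤ) - k₃ + 1) ((N : ℤ) - k₂ + 1))) ∧
    (k₂ = k₃ →
      PsiKP a₁ a₂ a₃ p c c' s l m n (k₂ - 1) k₃ =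
        PsiKP a₁ a₂ a₃ p c c' s l m n k₂ (k₃ - 1)) ∧
    (k₂ < k₃ →
      max (PsiKP a₁ a₂ a₃ p c c' s l m n (k₂ - 1) k₃)
          (taucKP a₁ a₂ a₃ p c c' s l m n ((N : ℤ) - k₂ + 1) ((N : ℤ) - k₃ + 1)) =
        PsiKP a₁ a₂ a₃ p c c' s l m n k₂ (k₃ - 1)) := by
  have hf1 : (fun α : ℕ => taucKP a₁ a₂ a₃ p c c' s l m n (α : ℤ)
        (2*(N:ℤ) + 1 - ((k₂-1 : ℕ) : ℤ) - (k₃ : ℤ) - α)) =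
      fun α : ℕ => taucKP a₁ a₂ a₃ p c c' s l m n (α : ℤ)
        (2*(N:ℤ) + 2 - (k₂ : ℤ) - (k₃ : ℤ) - α) :=
    funext fun α => taucKP_congr _ _ _ _ _ _ _ _ _ _ rfl (by omega)
  have hf2 : (fun α : ℕ => taucKP a₁ a₂ a₃ p c c' s l m n (α : ℤ)
        (2*(N:ℤ) + 1 - (k₂ : ℤ) - ((k₃-1 : ℕ) : ℤ) - α)) =
      fun α : ℕ => taucKP a₁ a₂ a₃ p c c' s l m n (α : ℤ)
        (2*(N:ℤ) + 2 - (k₂ : ℤ) - (k₃ : ℤ) - α) :=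
    funext fun α => taucKP_congr _ _ _ _ _ _ _ _ _ _ rfl (by omega)
  refine ⟨?_, ?_, ?_⟩
  · intro hlt
    rw [psi_canon a₁ a₂ a₃ p c c' s l m n (k₂-1) k₃ (by omega) hk₃',
        psi_canon a₁ a₂ a₃ p c c' s l m n k₂ (k₃-1) hk₂' (by omega), hf1, hf2,
        sup'_congr_set (Finset.Icc (N-(k₂-1)-k₃) (min (N-(k₂-1)) (N-k₃)))
          (Finset.Icc (N-k₂-(k₃-1)) ((N-k₂)+1))
          (Finset.nonempty_Icc.mpr (by omega)) (Finset.nonempty_Icc.mpr (by omega))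
          (by rw [show N-(k₂-1)-k₃ = N-k₂-(k₃-1) by omega,
                  show min (N-(k₂-1)) (N-k₃) = (N-k₂)+1 by omega]) _,
        sup'_congr_set (Finset.Icc (N-k₂-(k₃-1)) (min (N-k₂) (N-(k₃-1))))
          (Finset.Icc (N-k₂-(k₃-1)) (N-k₂))
          (Finset.nonempty_Icc.mpr (by omega)) (Finset.nonempty_Icc.mpr (by omega))
          (by rw [show min (N-k₂) (N-(k₃-1)) = N-k₂ by omega]) _,
        sup'_Icc_succ (N-k₂-(k₃-1)) (N-k₂) (by omega)]
    congr 1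
    exact (taucKP_congr _ _ _ _ _ _ _ _ _ _ (by omega) (by omega)).trans
      (taucKP_symm _ _ _ _ _ _ _ _ _ _ _ _)
  · intro heq
    subst heq
    rw [psi_canon a₁ a₂ a₃ p c c' s l m n (k₂-1) k₂ (by omega) hk₂',
        psi_canon a₁ a₂ a₃ p c c' s l m n k₂ (k₂-1) hk₂' (by omega), hf1, hf2,
        sup'_congr_set (Finset.Icc (N-(k₂-1)-k₂) (min (N-(k₂-1)) (N-k₂)))
          (Finset.Icc (N-k₂-(k₂-1)) (min (N-k₂) (N-(k₂-1))))
          (Finset.nonempty_Icc.mpr (by omega)) (Finset.nonempty_Icc.mpr (by omega))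
          (by rw [show N-(k₂-1)-k₂ = N-k₂-(k₂-1) by omega,
                  show min (N-(k₂-1)) (N-k₂) = min (N-k₂) (N-(k₂-1)) by omega]) _]
  · intro hlt
    rw [psi_canon a₁ a₂ a₃ p c c' s l m n (k₂-1) k₃ (by omega) hk₃',
        psi_canon a₁ a₂ a₃ p c c' s l m n k₂ (k₃-1) hk₂' (by omega), hf1, hf2,
        sup'_congr_set (Finset.Icc (N-(k₂-1)-k₃) (min (N-(k₂-1)) (N-k₃)))
          (Finset.Icc (N-(k₂-1)-k₃) (N-k₃))
          (Finset.nonempty_Icc.mpr (by omega)) (Finset.nonempty_Icc.mpr (by omega))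
          (by rw [show min (N-(k₂-1)) (N-k₃) = N-k₃ by omega]) _,
        sup'_congr_set (Finset.Icc (N-k₂-(k₃-1)) (min (N-k₂) (N-(k₃-1))))
          (Finset.Icc (N-(k₂-1)-k₃) ((N-k₃)+1))
          (Finset.nonempty_Icc.mpr (by omega)) (Finset.nonempty_Icc.mpr (by omega))
          (by rw [show N-k₂-(k₃-1) = N-(k₂-1)-k₃ by omega,
                  show min (N-k₂) (N-(k₃-1)) = (N-k₃)+1 by omega]) _,
        sup'_Icc_succ (N-(k₂-1)-k₃) (N-k₃) (by omega)]
    congr 1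
    exact (taucKP_symm _ _ _ _ _ _ _ _ _ _ _ _).trans
      (taucKP_congr _ _ _ _ _ _ _ _ _ _ (by omega) (by omega))
end
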